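/- arXiv:1809.08616 — 8 statements merged into one kernel-verified Lean document; each statement's English description precedes it below -/
import Mathlib

section
/- Under the hypotheses of the Sewing Lemma, assume in addition that |(δ̂₂Ξ)_{vmu}| ≤ c₃ u^{−β'} (v−u)^{ρ'} for all 0 < u ≤ m ≤ v ≤ T, where 0 ≤ β' ≤ 1, ρ' > 1 and ρ' − β' ≤ ρ − β. Then there is a constant C, depending only on c_S, α, β, β', ρ, ρ' and T, such that |(δ̂IΞ)_{ts} − Ξ_{ts}| ≤ C (c₂ + c₃) s^{−β'} (t−s)^{ρ'} for all 0 < s ≤ t ≤ T. -/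
/-!
Write `R_{ts} = (δ̂I)_{ts} - Ξ_{ts}`. Since `δ̂₂(δ̂I) = 0`, we have `δ̂₂R = -δ̂₂Ξ`, so bisecting `[s, t]`
gives `R_{ts} = R_{tm} + S(t - m) R_{ms} - (δ̂₂Ξ)_{tms}`. Iterating this `n` times, the new bound on
`δ̂₂Ξ` sums over the dyadic levels to a geometric series in `2^{1-ρ'}`, while the Sewing Lemma's bound
on `R` itself, applied at level `n`, contributes `2^{n(1-ρ)} s^{-β} (t - s)^ρ`, which vanishes as
`n → ∞`.
-/

namespace Sewing

variable {W : Type*} [NormedAddCommGroup W] [NormedSpace ℝ W]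

/-- `(δ̂y)_{ts}`. -/
def increment (S : ℝ → W →L[ℝ] W) (y : ℝ → W) (t s : ℝ) : W :=
  y t - S (t - s) (y s)

/-- `(δ̂₂z)_{tms}`. -/
def secondIncrement (S : ℝ → W →L[ℝ] W) (z : ℝ → ℝ → W) (t m s : ℝ) : W :=
  z t s - z t m - S (t - m) (z m s)

variable {S : ℝ → W →L[ℝ] W}

lemma apply_apply_of_semigroup
    (hSadd : ∀ t s : ℝ, 0 ≤ t → 0 ≤ s → S (t + s) = (S t).comp (S s))
    {a b c : ℝ} (hab : a ≤ b) (hbc : b ≤ c) (x : W) :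
    S (c - b) (S (b - a) x) = S (c - a) x := by
  rw [← ContinuousLinearMap.comp_apply, ← hSadd _ _ (sub_nonneg.2 hbc) (sub_nonneg.2 hab),
    sub_add_sub_cancel]

lemma secondIncrement_increment
    (hSadd : ∀ t s : ℝ, 0 ≤ t → 0 ≤ s → S (t + s) = (S t).comp (S s))
    (y : ℝ → W) {s m t : ℝ} (hsm : s ≤ m) (hmt : m ≤ t) :
    secondIncrement S (increment S y) t m s = 0 := by
  simp only [secondIncrement, increment, map_sub, apply_apply_of_semigroup hSadd hsm hmt]
  abel

lemma secondIncrement_sub (z w : ℝ → ℝ → W) (t m s : ℝ) :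
    secondIncrement S (fun t s => z t s - w t s) t m s
      = secondIncrement S z t m s - secondIncrement S w t m s := by
  simp only [secondIncrement, map_sub]
  abel

lemma rpow_weight_nonneg {β ρ s t : ℝ} (hs : 0 < s) (hst : s ≤ t) :
    0 ≤ s ^ (-β) * (t - s) ^ ρ :=
  mul_nonneg (Real.rpow_nonneg hs.le _) (Real.rpow_nonneg (sub_nonneg.2 hst) _)

lemma rpow_weight_midpoint_le {A β ρ s t : ℝ} (hA : 0 ≤ A) (hβ : 0 ≤ β) (hs : 0 < s)
    (hst : s ≤ t) :
    A * (((s + t) / 2) ^ (-β) * (t - (s + t) / 2) ^ ρ) + A * (s ^ (-β) * ((s + t) / 2 - s) ^ ρ)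
      ≤ 2 ^ (1 - ρ) * (A * (s ^ (-β) * (t - s) ^ ρ)) := by
  have hhalf : ((t - s) / 2) ^ ρ = (t - s) ^ ρ / 2 ^ ρ :=
    Real.div_rpow (sub_nonneg.2 hst) zero_le_two ρ
  have hmid : ((s + t) / 2) ^ (-β) ≤ s ^ (-β) :=
    Real.rpow_le_rpow_of_nonpos hs (by linarith) (neg_nonpos.2 hβ)
  rw [show t - (s + t) / 2 = (t - s) / 2 by ring, show (s + t) / 2 - s = (t - s) / 2 by ring,
    Real.rpow_sub two_pos, Real.rpow_one]
  calc A * (((s + t) / 2) ^ (-β) * ((t - s) / 2) ^ ρ) + A * (s ^ (-β) * ((t - s) / 2) ^ ρ)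
      ≤ A * (s ^ (-β) * ((t - s) / 2) ^ ρ) + A * (s ^ (-β) * ((t - s) / 2) ^ ρ) := by
        gcongr
    _ = 2 / 2 ^ ρ * (A * (s ^ (-β) * (t - s) ^ ρ)) := by
        rw [hhalf]
        ring

section Dyadic

variable {T K q g : ℝ} {R : ℝ → ℝ → W} {ω₁ ω₂ : ℝ → ℝ → ℝ}

/-- The outer factor `S (t₀ - t)` is carried along so that the bound `K` on the semigroup enters
once, instead of once per dyadic level. -/
lemma norm_apply_le_of_dyadic
    (hSadd : ∀ t s : ℝ, 0 ≤ t → 0 ≤ s → S (t + s) = (S t).comp (S s))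
    (hSK : ∀ r : ℝ, 0 ≤ r → r ≤ T → ‖S r‖ ≤ K) (hq : 0 ≤ q) (hg : g < 1)
    (hω₁ : ∀ s t : ℝ, 0 < s → s ≤ t → t ≤ T →
      ω₁ ((s + t) / 2) t + ω₁ s ((s + t) / 2) ≤ q * ω₁ s t)
    (hω₂ : ∀ s t : ℝ, 0 < s → s ≤ t → t ≤ T →
      ω₂ ((s + t) / 2) t + ω₂ s ((s + t) / 2) ≤ g * ω₂ s t)
    (hω₂_nonneg : ∀ s t : ℝ, 0 < s → s ≤ t → t ≤ T → 0 ≤ ω₂ s t)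
    (hR : ∀ s t : ℝ, 0 < s → s ≤ t → t ≤ T → ‖R t s‖ ≤ ω₁ s t)
    (hδR : ∀ s m t : ℝ, 0 < s → s ≤ m → m ≤ t → t ≤ T →
      ‖secondIncrement S R t m s‖ ≤ ω₂ s t)
    (n : ℕ) {s t t₀ : ℝ} (hs : 0 < s) (hst : s ≤ t) (htt₀ : t ≤ t₀) (ht₀T : t₀ ≤ T) :
    ‖S (t₀ - t) (R t s)‖ ≤ K * (q ^ n * ω₁ s t + (1 - g)⁻¹ * ω₂ s t) := by
  have hG : 0 ≤ (1 - g)⁻¹ := inv_nonneg.2 (by linarith)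
  have hSKx : ∀ {r : ℝ}, 0 ≤ r → r ≤ T → ∀ x : W, ‖S r x‖ ≤ K * ‖x‖ := fun h0 h1 x =>
    (S _).le_of_opNorm_le (hSK _ h0 h1) x
  have hK : 0 ≤ K := (norm_nonneg _).trans (hSK (t₀ - t) (by linarith) (by linarith))
  induction n generalizing s t with
  | zero =>
    calc ‖S (t₀ - t) (R t s)‖ ≤ K * ω₁ s t :=
          (hSKx (by linarith) (by linarith) _).trans
            (mul_le_mul_of_nonneg_left (hR s t hs hst (by linarith)) hK)
      _ ≤ K * (q ^ 0 * ω₁ s t + (1 - g)⁻¹ * ω₂ s t) := by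
          have hω₂st := hω₂_nonneg s t hs hst (by linarith)
          gcongr
          rw [pow_zero, one_mul, le_add_iff_nonneg_right]
          positivity
  | succ n ih =>
    set m := (s + t) / 2 with hm
    have hsm : s ≤ m := by linarith
    have hmt : m ≤ t := by linarith
    have hsplit : S (t₀ - t) (R t s) = S (t₀ - t) (R t m) + S (t₀ - m) (R m s)
        + S (t₀ - t) (secondIncrement S R t m s) := by
      rw [← apply_apply_of_semigroup hSadd hmt htt₀, ← map_add, ← map_add, secondIncrement]
      abel_nf
    have hδ : ‖S (t₀ - t) (secondIncrement S R t m s)‖ ≤ K * ω₂ s t :=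
      (hSKx (by linarith) (by linarith) _).trans
        (mul_le_mul_of_nonneg_left (hδR s m t hs hsm hmt (by linarith)) hK)
    have hGg : (1 - g)⁻¹ * g + 1 = (1 - g)⁻¹ := by
      field_simp [show 1 - g ≠ 0 by linarith]
      ring
    calc ‖S (t₀ - t) (R t s)‖
        ≤ K * (q ^ n * ω₁ m t + (1 - g)⁻¹ * ω₂ m t)
          + K * (q ^ n * ω₁ s m + (1 - g)⁻¹ * ω₂ s m) + K * ω₂ s t := by
          rw [hsplit]
          refine (norm_add₃_le).trans (add_le_add_three ?_ ?_ hδ)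
          · exact ih (by linarith) hmt htt₀
          · exact ih hs hsm (by linarith)
      _ = K * (q ^ n * (ω₁ m t + ω₁ s m) + ((1 - g)⁻¹ * (ω₂ m t + ω₂ s m) + ω₂ s t)) := by
          ring
      _ ≤ K * (q ^ n * (q * ω₁ s t) + ((1 - g)⁻¹ * (g * ω₂ s t) + ω₂ s t)) := by
          gcongr
          · exact hω₁ s t hs hst (by linarith)
          · exact hω₂ s t hs hst (by linarith)
      _ = K * (q ^ (n + 1) * ω₁ s t + (1 - g)⁻¹ * ω₂ s t) := by
          linear_combination K * ω₂ s t * hGg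

lemma norm_le_of_norm_secondIncrement_le
    (hS0 : S 0 = ContinuousLinearMap.id ℝ W)
    (hSadd : ∀ t s : ℝ, 0 ≤ t → 0 ≤ s → S (t + s) = (S t).comp (S s))
    (hSK : ∀ r : ℝ, 0 ≤ r → r ≤ T → ‖S r‖ ≤ K) (hq₀ : 0 ≤ q) (hq₁ : q < 1) (hg : g < 1)
    (hω₁ : ∀ s t : ℝ, 0 < s → s ≤ t → t ≤ T →
      ω₁ ((s + t) / 2) t + ω₁ s ((s + t) / 2) ≤ q * ω₁ s t)
    (hω₂ : ∀ s t : ℝ, 0 < s → s ≤ t → t ≤ T →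
      ω₂ ((s + t) / 2) t + ω₂ s ((s + t) / 2) ≤ g * ω₂ s t)
    (hω₂_nonneg : ∀ s t : ℝ, 0 < s → s ≤ t → t ≤ T → 0 ≤ ω₂ s t)
    (hR : ∀ s t : ℝ, 0 < s → s ≤ t → t ≤ T → ‖R t s‖ ≤ ω₁ s t)
    (hδR : ∀ s m t : ℝ, 0 < s → s ≤ m → m ≤ t → t ≤ T →
      ‖secondIncrement S R t m s‖ ≤ ω₂ s t)
    {s t : ℝ} (hs : 0 < s) (hst : s ≤ t) (htT : t ≤ T) :
    ‖R t s‖ ≤ K * ((1 - g)⁻¹ * ω₂ s t) := by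
  have hlevel (n : ℕ) : ‖R t s‖ ≤ K * (q ^ n * ω₁ s t + (1 - g)⁻¹ * ω₂ s t) := by
    simpa [hS0] using
      norm_apply_le_of_dyadic hSadd hSK hq₀ hg hω₁ hω₂ hω₂_nonneg hR hδR n hs hst le_rfl htT
  have hlim : Filter.Tendsto (fun n : ℕ => K * (q ^ n * ω₁ s t + (1 - g)⁻¹ * ω₂ s t))
      Filter.atTop (nhds (K * (0 * ω₁ s t + (1 - g)⁻¹ * ω₂ s t))) :=
    (((tendsto_pow_atTop_nhds_zero_of_lt_one hq₀ hq₁).mul_const _).add_const _).const_mul _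
  simpa using ge_of_tendsto' hlim hlevel

lemma norm_le_of_rpow_bounds
    (hS0 : S 0 = ContinuousLinearMap.id ℝ W)
    (hSadd : ∀ t s : ℝ, 0 ≤ t → 0 ≤ s → S (t + s) = (S t).comp (S s))
    (hSK : ∀ r : ℝ, 0 ≤ r → r ≤ T → ‖S r‖ ≤ K) {A c β β' ρ ρ' : ℝ} (hA : 0 ≤ A) (hc : 0 ≤ c)
    (hβ : 0 ≤ β) (hρ : 1 < ρ) (hβ' : 0 ≤ β') (hρ' : 1 < ρ')
    (hR : ∀ s t : ℝ, 0 < s → s ≤ t → t ≤ T → ‖R t s‖ ≤ A * (s ^ (-β) * (t - s) ^ ρ))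
    (hδR : ∀ s m t : ℝ, 0 < s → s ≤ m → m ≤ t → t ≤ T →
      ‖secondIncrement S R t m s‖ ≤ c * (s ^ (-β') * (t - s) ^ ρ'))
    {s t : ℝ} (hs : 0 < s) (hst : s ≤ t) (htT : t ≤ T) :
    ‖R t s‖ ≤ K * ((1 - 2 ^ (1 - ρ'))⁻¹ * (c * (s ^ (-β') * (t - s) ^ ρ'))) :=
  norm_le_of_norm_secondIncrement_le hS0 hSadd hSK (Real.rpow_nonneg zero_le_two _)
    (Real.rpow_lt_one_of_one_lt_of_neg one_lt_two (by linarith))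
    (Real.rpow_lt_one_of_one_lt_of_neg one_lt_two (by linarith))
    (fun _ _ hs hst _ => rpow_weight_midpoint_le hA hβ hs hst)
    (fun _ _ hs hst _ => rpow_weight_midpoint_le hc hβ' hs hst)
    (fun _ _ hs hst _ => mul_nonneg hc (rpow_weight_nonneg hs hst)) hR hδR hs hst htT

end Dyadic

end Sewing

open Sewing in
theorem sewing_lemma_additional_estimate_general
    {W : Type*} [NormedAddCommGroup W] [NormedSpace ℝ W]
    (T : ℝ)
    (S : ℝ → W →L[ℝ] W)
    (hS0 : S 0 = ContinuousLinearMap.id ℝ W)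
    (hSadd : ∀ t s : ℝ, 0 ≤ t → 0 ≤ s → S (t + s) = (S t).comp (S s))
    (cS : ℝ) (hScS : ∀ t : ℝ, 0 ≤ t → t ≤ T → ‖S t‖ ≤ cS)
    (Ξ : ℝ → ℝ → W)
    (c₂ c₃ β β' ρ ρ' : ℝ) (hc₂ : 0 ≤ c₂) (hc₃ : 0 ≤ c₃)
    (hβ0 : 0 ≤ β) (hρ : 1 < ρ)
    (hβ'0 : 0 ≤ β') (hρ' : 1 < ρ')
    (hΞ3 : ∀ u m v : ℝ, 0 < u → u ≤ m → m ≤ v → v ≤ T →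
      ‖Ξ v u - Ξ v m - S (v - m) (Ξ m u)‖ ≤ c₃ * u ^ (-β') * (v - u) ^ ρ')
    -- `I` is the sewing map of `Ξ` provided by the Sewing Lemma:
    (I : ℝ → W)
    (CI : ℝ)
    (hIbd2 : ∀ s t : ℝ, 0 < s → s ≤ t → t ≤ T →
      ‖I t - S (t - s) (I s) - Ξ t s‖ ≤ CI * c₂ * s ^ (-β) * (t - s) ^ ρ) :
    ∃ C : ℝ, 0 ≤ C ∧ ∀ s t : ℝ, 0 < s → s ≤ t → t ≤ T →
      ‖I t - S (t - s) (I s) - Ξ t s‖ ≤ C * (c₂ + c₃) * s ^ (-β') * (t - s) ^ ρ' := by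
  have hg : (2 : ℝ) ^ (1 - ρ') < 1 := Real.rpow_lt_one_of_one_lt_of_neg one_lt_two (by linarith)
  refine ⟨max cS 0 * (1 - 2 ^ (1 - ρ'))⁻¹,
    mul_nonneg (le_max_right _ _) (inv_nonneg.2 (by linarith)), fun s t hs hst htT => ?_⟩
  have hR : ∀ s t : ℝ, 0 < s → s ≤ t → t ≤ T →
      ‖increment S I t s - Ξ t s‖ ≤ max (CI * c₂) 0 * (s ^ (-β) * (t - s) ^ ρ) :=
    fun s t hs hst htT => (hIbd2 s t hs hst htT).trans <| by
      rw [mul_assoc]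
      exact mul_le_mul_of_nonneg_right (le_max_left _ _) (rpow_weight_nonneg hs hst)
  have hδR : ∀ s m t : ℝ, 0 < s → s ≤ m → m ≤ t → t ≤ T →
      ‖secondIncrement S (fun t s => increment S I t s - Ξ t s) t m s‖
        ≤ c₃ * (s ^ (-β') * (t - s) ^ ρ') := by
    intro s m t hs hsm hmt htT
    rw [secondIncrement_sub, secondIncrement_increment hSadd I hsm hmt, zero_sub, norm_neg,
      ← mul_assoc]
    exact hΞ3 s m t hs hsm hmt htT
  calc ‖I t - S (t - s) (I s) - Ξ t s‖
      ≤ max cS 0 * ((1 - 2 ^ (1 - ρ'))⁻¹ * (c₃ * (s ^ (-β') * (t - s) ^ ρ'))) :=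
        norm_le_of_rpow_bounds hS0 hSadd (fun r h0 h1 => (hScS r h0 h1).trans (le_max_left cS 0))
          (le_max_right _ _) hc₃ hβ0 hρ hβ'0 hρ' hR hδR hs hst htT
    _ ≤ max cS 0 * ((1 - 2 ^ (1 - ρ'))⁻¹ * ((c₂ + c₃) * (s ^ (-β') * (t - s) ^ ρ'))) := by
        gcongr
        linarith
    _ = max cS 0 * (1 - 2 ^ (1 - ρ'))⁻¹ * (c₂ + c₃) * s ^ (-β') * (t - s) ^ ρ' := by ring

/-- Additional estimate for the sewing map under a second bound on `δ̂₂Ξ`. -/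
theorem sewing_lemma_additional_estimate
    {W : Type*} [NormedAddCommGroup W] [NormedSpace ℝ W] [CompleteSpace W]
    (T : ℝ) (hT : 0 < T)
    (S : ℝ → W →L[ℝ] W)
    (hS0 : S 0 = ContinuousLinearMap.id ℝ W)
    (hSadd : ∀ t s : ℝ, 0 ≤ t → 0 ≤ s → S (t + s) = (S t).comp (S s))
    (cS : ℝ) (hScS : ∀ t : ℝ, 0 ≤ t → t ≤ T → ‖S t‖ ≤ cS)
    (Ξ : ℝ → ℝ → W)
    (hΞcont : ContinuousOn (fun p : ℝ × ℝ => Ξ p.1 p.2)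
      {p : ℝ × ℝ | 0 ≤ p.2 ∧ p.2 ≤ p.1 ∧ p.1 ≤ T})
    (c₁ c₂ c₃ α β β' ρ ρ' : ℝ) (hc₁ : 0 ≤ c₁) (hc₂ : 0 ≤ c₂) (hc₃ : 0 ≤ c₃)
    (hα0 : 0 ≤ α) (hα1 : α ≤ 1) (hβ0 : 0 ≤ β) (hβ1 : β ≤ 1) (hρ : 1 < ρ)
    (hαβρ : α + β ≤ ρ)
    (hβ'0 : 0 ≤ β') (hβ'1 : β' ≤ 1) (hρ' : 1 < ρ') (hρρ' : ρ' - β' ≤ ρ - β)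
    (hΞ1 : ∀ u v : ℝ, 0 ≤ u → u ≤ v → v ≤ T → ‖Ξ v u‖ ≤ c₁ * (v - u) ^ α)
    (hΞ2 : ∀ u m v : ℝ, 0 < u → u ≤ m → m ≤ v → v ≤ T →
      ‖Ξ v u - Ξ v m - S (v - m) (Ξ m u)‖ ≤ c₂ * u ^ (-β) * (v - u) ^ ρ)
    (hΞ3 : ∀ u m v : ℝ, 0 < u → u ≤ m → m ≤ v → v ≤ T →
      ‖Ξ v u - Ξ v m - S (v - m) (Ξ m u)‖ ≤ c₃ * u ^ (-β') * (v - u) ^ ρ')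
    -- `I` is the sewing map of `Ξ` provided by the Sewing Lemma:
    (I : ℝ → W) (hIcont : ContinuousOn I (Set.Icc 0 T)) (hI0 : I 0 = 0)
    (CI : ℝ)
    (hIbd1 : ∀ s t : ℝ, 0 ≤ s → s ≤ t → t ≤ T →
      ‖I t - S (t - s) (I s)‖ ≤ CI * (c₁ + c₂) * (t - s) ^ α)
    (hIbd2 : ∀ s t : ℝ, 0 < s → s ≤ t → t ≤ T →
      ‖I t - S (t - s) (I s) - Ξ t s‖ ≤ CI * c₂ * s ^ (-β) * (t - s) ^ ρ) :
    ∃ C : ℝ, 0 ≤ C ∧ ∀ s t : ℝ, 0 < s → s ≤ t → t ≤ T →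
      ‖I t - S (t - s) (I s) - Ξ t s‖ ≤ C * (c₂ + c₃) * s ^ (-β') * (t - s) ^ ρ' :=
  sewing_lemma_additional_estimate_general T S hS0 hSadd cS hScS Ξ c₂ c₃ β β' ρ ρ' hc₂ hc₃ hβ0 hρ
    hβ'0 hρ' hΞ3 I CI hIbd2
end

section
/- (Shift property.) Under the hypotheses of the Sewing Lemma, fix τ ∈ [0,T] and define the shifted approximation term θ_τΞ : Δ_{T−τ} → W by (θ_τΞ)_{vu} := Ξ_{v+τ, u+τ}. Then θ_τΞ again satisfies the hypotheses of the Sewing Lemma on [0, T−τ] (with the same constants), and for all τ ≤ s ≤ t ≤ T one has (δ̂IΞ)_{ts} = (δ̂I(θ_τΞ))_{t−τ, s−τ}, where I(θ_τΞ) is the sewing map of θ_τΞ on [0,T−τ]. -/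
/-!
For `τ < s`, the twisted increments of `I` and of the shifted path `v ↦ Iθ (v - τ)` are both
approximated by `Ξ` up to `O((v - m) ^ ρ)` with `ρ > 1`, uniformly for `s ≤ m ≤ v ≤ T`; summing
along finer and finer uniform partitions of `[s, t]` (the uniqueness half of the Sewing Lemma)
forces them to agree. The endpoint `s = τ`, where the weight `s ^ (-β)` blows up, is reached by
letting `s ↓ τ` in `δ̂_{tτ} = δ̂_{ts} + S(t - s) δ̂_{sτ}`: here `δ̂I_{sτ} → Ξ_{ττ} = 0` if `τ > 0`,
and `δ̂I_{s0} = I_s → 0` if `τ = 0`.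
-/

open Filter Topology Set

section TwistedIncrement

variable {W : Type*} [NormedAddCommGroup W] [NormedSpace ℝ W] {S : ℝ → W →L[ℝ] W}

/-- The paper's `(δ̂y)_{ts}`. -/
def twistedIncrement (S : ℝ → W →L[ℝ] W) (y : ℝ → W) (t s : ℝ) : W :=
  y t - S (t - s) (y s)

theorem twistedIncrement_sub (y z : ℝ → W) (t s : ℝ) :
    twistedIncrement S (y - z) t s = twistedIncrement S y t s - twistedIncrement S z t s := by
  simp only [twistedIncrement, Pi.sub_apply, map_sub]
  abel

theorem twistedIncrement_self (hS0 : S 0 = ContinuousLinearMap.id ℝ W) (y : ℝ → W) (t : ℝ) :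
    twistedIncrement S y t t = 0 := by
  simp [twistedIncrement, hS0]

theorem twistedIncrement_add_twistedIncrement
    (hSadd : ∀ t s : ℝ, 0 ≤ t → 0 ≤ s → S (t + s) = (S t).comp (S s))
    (y : ℝ → W) {s m t : ℝ} (hsm : s ≤ m) (hmt : m ≤ t) :
    twistedIncrement S y t m + S (t - m) (twistedIncrement S y m s) =
      twistedIncrement S y t s := by
  have hS : S (t - s) = (S (t - m)).comp (S (m - s)) := by
    rw [← hSadd _ _ (sub_nonneg.2 hmt) (sub_nonneg.2 hsm), sub_add_sub_cancel]
  simp only [twistedIncrement, map_sub, hS, ContinuousLinearMap.comp_apply]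
  abel

theorem norm_twistedIncrement_sub_mul_le (hS0 : S 0 = ContinuousLinearMap.id ℝ W)
    (hSadd : ∀ t s : ℝ, 0 ≤ t → 0 ≤ s → S (t + s) = (S t).comp (S s))
    {y : ℝ → W} {C ε h t : ℝ} (hC : 0 ≤ C) (hh : 0 ≤ h) (n : ℕ)
    (hSbd : ∀ u, 0 ≤ u → u ≤ n * h → ‖S u‖ ≤ C)
    (hy : ∀ k : ℕ, k < n → ‖twistedIncrement S y (t - k * h) (t - (k + 1) * h)‖ ≤ ε) :
    ‖twistedIncrement S y t (t - n * h)‖ ≤ n * (C * ε) := by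
  induction n with
  | zero => simp [twistedIncrement_self hS0]
  | succ n ih =>
    have hnh : 0 ≤ (n : ℝ) * h := by positivity
    have hsplit := twistedIncrement_add_twistedIncrement hSadd y
      (s := t - (n + 1) * h) (m := t - n * h) (t := t) (by nlinarith) (by linarith)
    rw [sub_sub_cancel] at hsplit
    push_cast
    rw [← hsplit]
    calc _ ≤ ‖twistedIncrement S y t (t - n * h)‖ +
          ‖S (n * h)‖ * ‖twistedIncrement S y (t - n * h) (t - (n + 1) * h)‖ :=
          norm_add_le_of_le le_rfl ((S _).le_opNorm _)
      _ ≤ n * (C * ε) + C * ε := by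
          gcongr
          · exact ih (fun u hu hun => hSbd u hu (by push_cast; nlinarith))
              (fun k hk => hy k (by omega))
          · exact hSbd _ hnh (by push_cast; nlinarith)
          · exact hy n (by omega)
      _ = (n + 1) * (C * ε) := by ring

theorem twistedIncrement_eq_zero_of_norm_le_rpow (hS0 : S 0 = ContinuousLinearMap.id ℝ W)
    (hSadd : ∀ t s : ℝ, 0 ≤ t → 0 ≤ s → S (t + s) = (S t).comp (S s))
    {y : ℝ → W} {C M ρ a t : ℝ} (hρ : 1 < ρ) (hat : a ≤ t)
    (hSbd : ∀ u, 0 ≤ u → u ≤ t - a → ‖S u‖ ≤ C)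
    (hy : ∀ m v, a ≤ m → m ≤ v → v ≤ t → ‖twistedIncrement S y v m‖ ≤ M * (v - m) ^ ρ) :
    twistedIncrement S y t a = 0 := by
  have hC : 0 ≤ C := (norm_nonneg _).trans (hSbd 0 le_rfl (sub_nonneg.2 hat))
  have hbound : ∀ n : ℕ, 0 < n →
      ‖twistedIncrement S y t a‖ ≤ C * M * (t - a) ^ ρ * (n : ℝ) ^ (-(ρ - 1)) := by
    intro n hn
    have hn' : (0 : ℝ) < n := Nat.cast_pos.2 hn
    set h := (t - a) / n with hh
    have hnh : n * h = t - a := by rw [hh]; field_simp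
    have hh0 : 0 ≤ h := div_nonneg (sub_nonneg.2 hat) hn'.le
    have htel := norm_twistedIncrement_sub_mul_le hS0 hSadd (y := y) (t := t) hC hh0 n
      (fun u hu hun => hSbd u hu (hnh ▸ hun)) (ε := M * h ^ ρ) fun k hk => by
        have hk' : ((k : ℝ) + 1) * h ≤ n * h := by gcongr; exact_mod_cast hk
        simpa [sub_sub_sub_cancel_left, ← sub_mul] using
          hy (t - (k + 1) * h) (t - k * h) (by linarith) (by nlinarith) (by nlinarith)
    rw [hnh, sub_sub_cancel] at htel
    calc _ ≤ (n : ℝ) * (C * (M * h ^ ρ)) := htel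
      _ = C * M * (t - a) ^ ρ * (n : ℝ) ^ (-(ρ - 1)) := by
        rw [hh, Real.div_rpow (sub_nonneg.2 hat) hn'.le, Real.rpow_neg hn'.le,
          Real.rpow_sub hn', Real.rpow_one]
        field_simp
  have hlim : Tendsto (fun n : ℕ => C * M * (t - a) ^ ρ * (n : ℝ) ^ (-(ρ - 1))) atTop (𝓝 0) := by
    simpa using ((tendsto_rpow_neg_atTop (by linarith : 0 < ρ - 1)).comp
      tendsto_natCast_atTop_atTop).const_mul (C * M * (t - a) ^ ρ)
  refine norm_le_zero_iff.1 (ge_of_tendsto hlim ?_)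
  filter_upwards [eventually_gt_atTop 0] with n hn using hbound n hn

theorem twistedIncrement_eq_of_norm_sub_le_rpow (hS0 : S 0 = ContinuousLinearMap.id ℝ W)
    (hSadd : ∀ t s : ℝ, 0 ≤ t → 0 ≤ s → S (t + s) = (S t).comp (S s))
    {y z : ℝ → W} {Ξ : ℝ → ℝ → W} {A B C ρ a t : ℝ} (hρ : 1 < ρ) (hat : a ≤ t)
    (hSbd : ∀ u, 0 ≤ u → u ≤ t - a → ‖S u‖ ≤ C)
    (hy : ∀ m v, a ≤ m → m ≤ v → v ≤ t → ‖twistedIncrement S y v m - Ξ v m‖ ≤ A * (v - m) ^ ρ)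
    (hz : ∀ m v, a ≤ m → m ≤ v → v ≤ t → ‖twistedIncrement S z v m - Ξ v m‖ ≤ B * (v - m) ^ ρ) :
    twistedIncrement S y t a = twistedIncrement S z t a := by
  rw [← sub_eq_zero, ← twistedIncrement_sub]
  refine twistedIncrement_eq_zero_of_norm_le_rpow hS0 hSadd hρ hat hSbd
    (M := A + B) fun m v ham hmv hvt => ?_
  rw [twistedIncrement_sub, ← sub_sub_sub_cancel_right _ _ (Ξ v m), add_mul]
  exact norm_sub_le_of_le (hy m v ham hmv hvt) (hz m v ham hmv hvt)

theorem twistedIncrement_eq_zero_of_tendsto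
    (hSadd : ∀ t s : ℝ, 0 ≤ t → 0 ≤ s → S (t + s) = (S t).comp (S s))
    {y : ℝ → W} {C a t : ℝ} (hat : a < t) (hSbd : ∀ u, 0 ≤ u → u ≤ t - a → ‖S u‖ ≤ C)
    (hy : ∀ s ∈ Ioc a t, twistedIncrement S y t s = 0)
    (hlim : Tendsto (fun s => twistedIncrement S y s a) (𝓝[>] a) (𝓝 0)) :
    twistedIncrement S y t a = 0 := by
  have hle : ∀ s ∈ Ioc a t, ‖twistedIncrement S y t a‖ ≤ C * ‖twistedIncrement S y s a‖ := by
    intro s hs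
    rw [← twistedIncrement_add_twistedIncrement hSadd y hs.1.le hs.2, hy s hs, zero_add]
    exact (S _).le_of_opNorm_le (hSbd _ (sub_nonneg.2 hs.2) (by linarith [hs.1])) _
  have hC : Tendsto (fun s => C * ‖twistedIncrement S y s a‖) (𝓝[>] a) (𝓝 0) := by
    simpa using hlim.norm.const_mul C
  refine norm_le_zero_iff.1 (ge_of_tendsto hC ?_)
  filter_upwards [Ioc_mem_nhdsGT hat] with s hs using hle s hs

theorem twistedIncrement_eq_of_tendsto
    (hSadd : ∀ t s : ℝ, 0 ≤ t → 0 ≤ s → S (t + s) = (S t).comp (S s))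
    {y z : ℝ → W} {C a t : ℝ} (hat : a < t) (hSbd : ∀ u, 0 ≤ u → u ≤ t - a → ‖S u‖ ≤ C)
    (hyz : ∀ s ∈ Ioc a t, twistedIncrement S y t s = twistedIncrement S z t s)
    (hy : Tendsto (fun s => twistedIncrement S y s a) (𝓝[>] a) (𝓝 0))
    (hz : Tendsto (fun s => twistedIncrement S z s a) (𝓝[>] a) (𝓝 0)) :
    twistedIncrement S y t a = twistedIncrement S z t a := by
  rw [← sub_eq_zero, ← twistedIncrement_sub]
  refine twistedIncrement_eq_zero_of_tendsto hSadd hat hSbd (fun s hs => ?_) ?_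
  · rw [twistedIncrement_sub, hyz s hs, sub_self]
  · simpa only [twistedIncrement_sub, sub_zero] using hy.sub hz

theorem tendsto_twistedIncrement_nhdsGT_of_continuousWithinAt {y : ℝ → W} {τ L : ℝ}
    (hτL : τ < L) (hyτ : y τ = 0) (hy : ContinuousWithinAt y (Icc τ L) τ) :
    Tendsto (fun s => twistedIncrement S y s τ) (𝓝[>] τ) (𝓝 0) := by
  simpa [twistedIncrement, hyτ] using (hy.mono_of_mem_nhdsWithin (Icc_mem_nhdsGT hτL)).tendsto

theorem norm_twistedIncrement_sub_le_of_rpow_neg {y : ℝ → W} {Ξ : ℝ → ℝ → W}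
    {K β ρ L a m v : ℝ} (hβ : 0 ≤ β)
    (hy : ∀ s t, 0 < s → s ≤ t → t ≤ L →
      ‖twistedIncrement S y t s - Ξ t s‖ ≤ K * s ^ (-β) * (t - s) ^ ρ)
    (ha : 0 < a) (ham : a ≤ m) (hmv : m ≤ v) (hvL : v ≤ L) :
    ‖twistedIncrement S y v m - Ξ v m‖ ≤ |K| * a ^ (-β) * (v - m) ^ ρ := by
  refine (hy m v (ha.trans_le ham) hmv hvL).trans ?_
  have hma : m ^ (-β) ≤ a ^ (-β) := Real.rpow_le_rpow_of_nonpos ha ham (neg_nonpos.2 hβ)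
  have hvm : 0 ≤ (v - m) ^ ρ := Real.rpow_nonneg (sub_nonneg.2 hmv) ρ
  exact mul_le_mul_of_nonneg_right
    (mul_le_mul (le_abs_self K) hma (Real.rpow_nonneg (ha.le.trans ham) _) (abs_nonneg K)) hvm

theorem twistedIncrement_eq_shift_of_lt (hS0 : S 0 = ContinuousLinearMap.id ℝ W)
    (hSadd : ∀ t s : ℝ, 0 ≤ t → 0 ≤ s → S (t + s) = (S t).comp (S s))
    {y z : ℝ → W} {Ξ : ℝ → ℝ → W} {C K K' β ρ L τ s t : ℝ}
    (hSbd : ∀ u, 0 ≤ u → u ≤ L → ‖S u‖ ≤ C) (hβ : 0 ≤ β) (hρ : 1 < ρ)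
    (hy : ∀ s t, 0 < s → s ≤ t → t ≤ L →
      ‖twistedIncrement S y t s - Ξ t s‖ ≤ K * s ^ (-β) * (t - s) ^ ρ)
    (hz : ∀ s t, 0 < s → s ≤ t → t ≤ L - τ →
      ‖twistedIncrement S z t s - Ξ (t + τ) (s + τ)‖ ≤ K' * s ^ (-β) * (t - s) ^ ρ)
    (hτ : 0 ≤ τ) (hτs : τ < s) (hst : s ≤ t) (htL : t ≤ L) :
    twistedIncrement S y t s = twistedIncrement S (fun v => z (v - τ)) t s := by
  refine twistedIncrement_eq_of_norm_sub_le_rpow (B := |K'| * (s - τ) ^ (-β))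
    hS0 hSadd hρ hst (fun u hu hut => hSbd u hu (by linarith))
    (fun m v hsm hmv hvt => norm_twistedIncrement_sub_le_of_rpow_neg hβ hy
      (by linarith) hsm hmv (hvt.trans htL)) (fun m v hsm hmv hvt => ?_)
  simpa [twistedIncrement] using norm_twistedIncrement_sub_le_of_rpow_neg
    (Ξ := fun v u => Ξ (v + τ) (u + τ)) hβ hz (sub_pos.2 hτs)
    (sub_le_sub_right hsm τ) (sub_le_sub_right hmv τ) (by linarith)

theorem tendsto_twistedIncrement_nhdsGT_of_pos (hS0 : S 0 = ContinuousLinearMap.id ℝ W)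
    {y : ℝ → W} {Ξ : ℝ → ℝ → W} {K β ρ L τ : ℝ} (hρ : 0 < ρ) (hτ : 0 < τ) (hτL : τ < L)
    (hy : ∀ s t, 0 < s → s ≤ t → t ≤ L →
      ‖twistedIncrement S y t s - Ξ t s‖ ≤ K * s ^ (-β) * (t - s) ^ ρ)
    (hΞ : ContinuousWithinAt (fun s => Ξ s τ) (Icc τ L) τ) :
    Tendsto (fun s => twistedIncrement S y s τ) (𝓝[>] τ) (𝓝 0) := by
  have hΞττ : Ξ τ τ = 0 := by
    simpa [twistedIncrement_self hS0, Real.zero_rpow hρ.ne'] using hy τ τ hτ le_rfl hτL.le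
  have hrem : Tendsto (fun s => twistedIncrement S y s τ - Ξ s τ) (𝓝[>] τ) (𝓝 0) := by
    refine squeeze_zero_norm' (a := fun s => K * τ ^ (-β) * (s - τ) ^ ρ) ?_ ?_
    · filter_upwards [Ioc_mem_nhdsGT hτL] with s hs using hy τ s hτ hs.1.le hs.2
    · have hcont : Continuous fun s : ℝ => K * τ ^ (-β) * (s - τ) ^ ρ :=
        continuous_const.mul ((continuous_sub_right τ).rpow_const fun _ => Or.inr hρ.le)
      simpa [Real.zero_rpow hρ.ne'] using (hcont.tendsto τ).mono_left nhdsWithin_le_nhds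
  have hΞlim : Tendsto (fun s => Ξ s τ) (𝓝[>] τ) (𝓝 0) :=
    hΞττ ▸ (hΞ.mono_of_mem_nhdsWithin (Icc_mem_nhdsGT hτL)).tendsto
  simpa using hrem.add hΞlim

theorem tendsto_twistedIncrement_nhdsGT (hS0 : S 0 = ContinuousLinearMap.id ℝ W)
    {y : ℝ → W} {Ξ : ℝ → ℝ → W} {K β ρ L τ : ℝ} (hρ : 0 < ρ) (hτ : 0 ≤ τ) (hτL : τ < L)
    (hy0 : y 0 = 0) (hycont : ContinuousOn y (Icc 0 L))
    (hy : ∀ s t, 0 < s → s ≤ t → t ≤ L →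
      ‖twistedIncrement S y t s - Ξ t s‖ ≤ K * s ^ (-β) * (t - s) ^ ρ)
    (hΞ : ContinuousWithinAt (fun s => Ξ s τ) (Icc τ L) τ) :
    Tendsto (fun s => twistedIncrement S y s τ) (𝓝[>] τ) (𝓝 0) := by
  rcases hτ.eq_or_lt with rfl | hτ
  · exact tendsto_twistedIncrement_nhdsGT_of_continuousWithinAt hτL hy0
      (hycont 0 ⟨le_rfl, hτL.le⟩)
  · exact tendsto_twistedIncrement_nhdsGT_of_pos hS0 hρ hτ hτL hy hΞ

theorem twistedIncrement_eq_shift (hS0 : S 0 = ContinuousLinearMap.id ℝ W)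
    (hSadd : ∀ t s : ℝ, 0 ≤ t → 0 ≤ s → S (t + s) = (S t).comp (S s))
    {y z : ℝ → W} {Ξ : ℝ → ℝ → W} {C K K' β ρ L τ s t : ℝ}
    (hSbd : ∀ u, 0 ≤ u → u ≤ L → ‖S u‖ ≤ C) (hβ : 0 ≤ β) (hρ : 1 < ρ)
    (hΞ : ContinuousOn (fun p : ℝ × ℝ => Ξ p.1 p.2) {p : ℝ × ℝ | 0 ≤ p.2 ∧ p.2 ≤ p.1 ∧ p.1 ≤ L})
    (hy0 : y 0 = 0) (hycont : ContinuousOn y (Icc 0 L))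
    (hy : ∀ s t, 0 < s → s ≤ t → t ≤ L →
      ‖twistedIncrement S y t s - Ξ t s‖ ≤ K * s ^ (-β) * (t - s) ^ ρ)
    (hz0 : z 0 = 0) (hzcont : ContinuousOn z (Icc 0 (L - τ)))
    (hz : ∀ s t, 0 < s → s ≤ t → t ≤ L - τ →
      ‖twistedIncrement S z t s - Ξ (t + τ) (s + τ)‖ ≤ K' * s ^ (-β) * (t - s) ^ ρ)
    (hτ : 0 ≤ τ) (hτs : τ ≤ s) (hst : s ≤ t) (htL : t ≤ L) :
    twistedIncrement S y t s = twistedIncrement S (fun v => z (v - τ)) t s := by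
  rcases hst.eq_or_lt with rfl | hst
  · simp only [twistedIncrement_self hS0]
  rcases hτs.eq_or_lt with rfl | hτs
  · have hΞτ : ContinuousWithinAt (fun v => Ξ v τ) (Icc τ L) τ :=
      hΞ.comp (continuous_id.prodMk continuous_const).continuousOn
        (fun v hv => ⟨hτ, hv.1, hv.2⟩) τ ⟨le_rfl, hst.le.trans htL⟩
    have hzτ : ContinuousWithinAt (fun v => z (v - τ)) (Icc τ L) τ :=
      hzcont.comp (continuous_sub_right τ).continuousOn
        (fun v hv => ⟨sub_nonneg.2 hv.1, sub_le_sub_right hv.2 τ⟩) τ ⟨le_rfl, hst.le.trans htL⟩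
    exact twistedIncrement_eq_of_tendsto hSadd hst (fun u hu hut => hSbd u hu (by linarith))
      (fun v hv => twistedIncrement_eq_shift_of_lt hS0 hSadd hSbd hβ hρ hy hz hτ hv.1 hv.2 htL)
      (tendsto_twistedIncrement_nhdsGT hS0 (by linarith) hτ (hst.trans_le htL) hy0 hycont hy hΞτ)
      (tendsto_twistedIncrement_nhdsGT_of_continuousWithinAt (hst.trans_le htL)
        (by simp [hz0]) hzτ)
  · exact twistedIncrement_eq_shift_of_lt hS0 hSadd hSbd hβ hρ hy hz hτ hτs hst.le htL

end TwistedIncrement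

theorem sewing_map_shift_property_general
    {W : Type*} [NormedAddCommGroup W] [NormedSpace ℝ W]
    (T : ℝ)
    (S : ℝ → W →L[ℝ] W)
    (hS0 : S 0 = ContinuousLinearMap.id ℝ W)
    (hSadd : ∀ t s : ℝ, 0 ≤ t → 0 ≤ s → S (t + s) = (S t).comp (S s))
    (cS : ℝ) (hScS : ∀ t : ℝ, 0 ≤ t → t ≤ T → ‖S t‖ ≤ cS)
    (Ξ : ℝ → ℝ → W)
    (hΞcont : ContinuousOn (fun p : ℝ × ℝ => Ξ p.1 p.2)
      {p : ℝ × ℝ | 0 ≤ p.2 ∧ p.2 ≤ p.1 ∧ p.1 ≤ T})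
    (c₁ c₂ α β ρ : ℝ) (hc₂ : 0 ≤ c₂)
    (hβ0 : 0 ≤ β) (hρ : 1 < ρ)
    (hΞ1 : ∀ u v : ℝ, 0 ≤ u → u ≤ v → v ≤ T → ‖Ξ v u‖ ≤ c₁ * (v - u) ^ α)
    (hΞ2 : ∀ u m v : ℝ, 0 < u → u ≤ m → m ≤ v → v ≤ T →
      ‖Ξ v u - Ξ v m - S (v - m) (Ξ m u)‖ ≤ c₂ * u ^ (-β) * (v - u) ^ ρ)
    (τ : ℝ) (hτ0 : 0 ≤ τ)
    -- `I` is the sewing map of `Ξ` on `[0,T]`: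
    (I : ℝ → W) (hIcont : ContinuousOn I (Set.Icc 0 T)) (hI0 : I 0 = 0)
    (CI : ℝ)
    (hIbd2 : ∀ s t : ℝ, 0 < s → s ≤ t → t ≤ T →
      ‖I t - S (t - s) (I s) - Ξ t s‖ ≤ CI * c₂ * s ^ (-β) * (t - s) ^ ρ)
    -- `Iθ` is the sewing map of the shifted term `θ_τΞ` on `[0, T-τ]`:
    (Iθ : ℝ → W) (hIθcont : ContinuousOn Iθ (Set.Icc 0 (T - τ))) (hIθ0 : Iθ 0 = 0)
    (CIθ : ℝ)
    (hIθbd2 : ∀ s t : ℝ, 0 < s → s ≤ t → t ≤ T - τ →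
      ‖Iθ t - S (t - s) (Iθ s) - Ξ (t + τ) (s + τ)‖ ≤ CIθ * c₂ * s ^ (-β) * (t - s) ^ ρ) :
    -- the shifted term satisfies the Sewing Lemma hypotheses on `[0, T-τ]` with the same constants:
    (∀ u v : ℝ, 0 ≤ u → u ≤ v → v ≤ T - τ →
      ‖Ξ (v + τ) (u + τ)‖ ≤ c₁ * (v - u) ^ α) ∧
    (∀ u m v : ℝ, 0 < u → u ≤ m → m ≤ v → v ≤ T - τ →
      ‖Ξ (v + τ) (u + τ) - Ξ (v + τ) (m + τ) - S (v - m) (Ξ (m + τ) (u + τ))‖ ≤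
        c₂ * u ^ (-β) * (v - u) ^ ρ) ∧
    -- and the shift identity holds:
    (∀ s t : ℝ, τ ≤ s → s ≤ t → t ≤ T →
      I t - S (t - s) (I s) = Iθ (t - τ) - S (t - s) (Iθ (s - τ))) := by
  refine ⟨fun u v hu huv hvT => ?_, fun u m v hu hum hmv hvT => ?_,
    fun s t hτs hst htT => twistedIncrement_eq_shift hS0 hSadd hScS hβ0 hρ hΞcont
      hI0 hIcont hIbd2 hIθ0 hIθcont hIθbd2 hτ0 hτs hst htT⟩
  · simpa only [add_sub_add_right_eq_sub] using
      hΞ1 (u + τ) (v + τ) (by linarith) (by linarith) (by linarith)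
  · have hτu : (u + τ) ^ (-β) ≤ u ^ (-β) :=
      Real.rpow_le_rpow_of_nonpos hu (by linarith) (neg_nonpos.2 hβ0)
    calc _ ≤ c₂ * (u + τ) ^ (-β) * (v - u) ^ ρ := by
          simpa only [add_sub_add_right_eq_sub] using
            hΞ2 (u + τ) (m + τ) (v + τ) (by linarith) (by linarith) (by linarith) (by linarith)
      _ ≤ c₂ * u ^ (-β) * (v - u) ^ ρ := by gcongr; exact Real.rpow_nonneg (by linarith) ρ

/-- Shift property of the sewing map. -/
theorem sewing_map_shift_property
    {W : Type*} [NormedAddCommGroup W] [NormedSpace ℝ W] [CompleteSpace W]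
    (T : ℝ) (hT : 0 < T)
    (S : ℝ → W →L[ℝ] W)
    (hS0 : S 0 = ContinuousLinearMap.id ℝ W)
    (hSadd : ∀ t s : ℝ, 0 ≤ t → 0 ≤ s → S (t + s) = (S t).comp (S s))
    (cS : ℝ) (hScS : ∀ t : ℝ, 0 ≤ t → t ≤ T → ‖S t‖ ≤ cS)
    (Ξ : ℝ → ℝ → W)
    (hΞcont : ContinuousOn (fun p : ℝ × ℝ => Ξ p.1 p.2)
      {p : ℝ × ℝ | 0 ≤ p.2 ∧ p.2 ≤ p.1 ∧ p.1 ≤ T})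
    (c₁ c₂ α β ρ : ℝ) (hc₁ : 0 ≤ c₁) (hc₂ : 0 ≤ c₂)
    (hα0 : 0 ≤ α) (hα1 : α ≤ 1) (hβ0 : 0 ≤ β) (hβ1 : β ≤ 1) (hρ : 1 < ρ)
    (hαβρ : α + β ≤ ρ)
    (hΞ1 : ∀ u v : ℝ, 0 ≤ u → u ≤ v → v ≤ T → ‖Ξ v u‖ ≤ c₁ * (v - u) ^ α)
    (hΞ2 : ∀ u m v : ℝ, 0 < u → u ≤ m → m ≤ v → v ≤ T →
      ‖Ξ v u - Ξ v m - S (v - m) (Ξ m u)‖ ≤ c₂ * u ^ (-β) * (v - u) ^ ρ)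
    (τ : ℝ) (hτ0 : 0 ≤ τ) (hτT : τ ≤ T)
    -- `I` is the sewing map of `Ξ` on `[0,T]`:
    (I : ℝ → W) (hIcont : ContinuousOn I (Set.Icc 0 T)) (hI0 : I 0 = 0)
    (CI : ℝ)
    (hIbd1 : ∀ s t : ℝ, 0 ≤ s → s ≤ t → t ≤ T →
      ‖I t - S (t - s) (I s)‖ ≤ CI * (c₁ + c₂) * (t - s) ^ α)
    (hIbd2 : ∀ s t : ℝ, 0 < s → s ≤ t → t ≤ T →
      ‖I t - S (t - s) (I s) - Ξ t s‖ ≤ CI * c₂ * s ^ (-β) * (t - s) ^ ρ)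
    -- `Iθ` is the sewing map of the shifted term `θ_τΞ` on `[0, T-τ]`:
    (Iθ : ℝ → W) (hIθcont : ContinuousOn Iθ (Set.Icc 0 (T - τ))) (hIθ0 : Iθ 0 = 0)
    (CIθ : ℝ)
    (hIθbd1 : ∀ s t : ℝ, 0 ≤ s → s ≤ t → t ≤ T - τ →
      ‖Iθ t - S (t - s) (Iθ s)‖ ≤ CIθ * (c₁ + c₂) * (t - s) ^ α)
    (hIθbd2 : ∀ s t : ℝ, 0 < s → s ≤ t → t ≤ T - τ →
      ‖Iθ t - S (t - s) (Iθ s) - Ξ (t + τ) (s + τ)‖ ≤ CIθ * c₂ * s ^ (-β) * (t - s) ^ ρ) :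
    -- the shifted term satisfies the Sewing Lemma hypotheses on `[0, T-τ]` with the same constants:
    (∀ u v : ℝ, 0 ≤ u → u ≤ v → v ≤ T - τ →
      ‖Ξ (v + τ) (u + τ)‖ ≤ c₁ * (v - u) ^ α) ∧
    (∀ u m v : ℝ, 0 < u → u ≤ m → m ≤ v → v ≤ T - τ →
      ‖Ξ (v + τ) (u + τ) - Ξ (v + τ) (m + τ) - S (v - m) (Ξ (m + τ) (u + τ))‖ ≤
        c₂ * u ^ (-β) * (v - u) ^ ρ) ∧
    -- and the shift identity holds:
    (∀ s t : ℝ, τ ≤ s → s ≤ t → t ≤ T →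
      I t - S (t - s) (I s) = Iθ (t - τ) - S (t - s) (Iθ (s - τ))) :=
  sewing_map_shift_property_general T S hS0 hSadd cS hScS Ξ hΞcont c₁ c₂ α β ρ hc₂ hβ0 hρ hΞ1 hΞ2 τ
    hτ0 I hIcont hI0 CI hIbd2 Iθ hIθcont hIθ0 CIθ hIθbd2
end

section
/- Under the hypotheses of the Sewing Lemma, let 0 ≤ ε < α and suppose there are a real Banach space (E, ‖·‖_E), a continuous linear injection ι : E → W with ‖ι(e)‖ ≤ ‖e‖_E for all e ∈ E, a constant C₀ ≥ 0, and for each t ∈ (0,T] a linear map S_E(t) : W → E with ι(S_E(t)x) = S(t)x and ‖S_E(t)x‖_E ≤ C₀ t^{−ε} ‖x‖ for all x ∈ W. Then for all 0 ≤ s < t ≤ T the element (δ̂IΞ)_{ts} lies in the image of ι, say (δ̂IΞ)_{ts} = ι(e_{ts}), and there is a constant C depending only on c_S, C₀, α, β, ρ, ε and T such that ‖e_{ts}‖_E ≤ C (c₁ + c₂)(t−s)^{α−ε}. -/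
/-!
Split `[s, t]` at the dyadic points `qₙ = t - (t - s) / 2ⁿ`. The cocycle identity
`(δ̂I)_{vu} = (δ̂I)_{vm} + S(v - m) (δ̂I)_{mu}` telescopes to
`(δ̂I)_{ts} = ∑ₙ S(t - qₙ₊₁) (δ̂I)_{qₙ₊₁ qₙ}`, the remainder `(δ̂I)_{t qₙ}` vanishing by the Hölder
bound. In the `n`-th term the smoothing time `t - qₙ₊₁` equals the length `(t - s) / 2ⁿ⁺¹` of the
increment it acts on, so the term lifts to `E` with norm at most `C₀ A ((t - s) / 2ⁿ⁺¹)^(α - ε)`.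
As `ε < α` these bounds form a convergent geometric series, and the sum of the lifts in the
complete space `E` is the required preimage of `(δ̂I)_{ts}`.
-/

open Filter Topology Finset

theorem ContinuousLinearMap.exists_apply_eq_norm_le_of_tendsto_sum
    {𝕜 E F : Type*} [Semiring 𝕜] [NormedAddCommGroup E] [CompleteSpace E] [Module 𝕜 E]
    [AddCommGroup F] [TopologicalSpace F] [T2Space F] [Module 𝕜 F]
    (L : E →L[𝕜] F) {a : ℕ → E} {b : ℕ → ℝ} {B : ℝ} {x : F}
    (hab : ∀ n, ‖a n‖ ≤ b n) (hb : HasSum b B)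
    (hx : Tendsto (fun N => ∑ n ∈ range N, L (a n)) atTop (𝓝 x)) :
    ∃ e, L e = x ∧ ‖e‖ ≤ B := by
  have ha : HasSum a (∑' n, a n) := (Summable.of_norm_bounded hb.summable hab).hasSum
  exact ⟨∑' n, a n, tendsto_nhds_unique (L.hasSum ha).tendsto_sum_nat hx,
    tsum_of_norm_bounded hb hab⟩

theorem div_two_pow_rpow {x : ℝ} (hx : 0 ≤ x) (γ : ℝ) (n : ℕ) :
    (x / 2 ^ n) ^ γ = x ^ γ * ((2 : ℝ) ^ γ)⁻¹ ^ n := by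
  rw [Real.div_rpow hx (by positivity), ← Real.rpow_pow_comm zero_le_two, div_eq_mul_inv, inv_pow]

section Dyadic

noncomputable def dyadicPoint (s t : ℝ) (n : ℕ) : ℝ := t - (t - s) / 2 ^ n

variable {s t : ℝ}

@[simp]
theorem dyadicPoint_zero : dyadicPoint s t 0 = s := by
  simp [dyadicPoint]

theorem sub_dyadicPoint (n : ℕ) : t - dyadicPoint s t n = (t - s) / 2 ^ n :=
  sub_sub_cancel _ _

theorem dyadicPoint_succ_sub (n : ℕ) :
    dyadicPoint s t (n + 1) - dyadicPoint s t n = (t - s) / 2 ^ (n + 1) := by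
  simp only [dyadicPoint, pow_succ]
  field_simp
  ring

theorem dyadicPoint_le (hst : s ≤ t) (n : ℕ) : dyadicPoint s t n ≤ t :=
  sub_le_self _ (div_nonneg (sub_nonneg.2 hst) (by positivity))

theorem monotone_dyadicPoint (hst : s ≤ t) : Monotone (dyadicPoint s t) :=
  monotone_nat_of_le_succ fun n => by
    have := dyadicPoint_succ_sub (s := s) (t := t) n
    have : 0 ≤ (t - s) / 2 ^ (n + 1) := div_nonneg (sub_nonneg.2 hst) (by positivity)
    linarith

theorem le_dyadicPoint (hst : s ≤ t) (n : ℕ) : s ≤ dyadicPoint s t n := by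
  simpa using monotone_dyadicPoint hst n.zero_le

end Dyadic

section SemigroupIncrement

variable {W : Type*} [NormedAddCommGroup W] [NormedSpace ℝ W]

/-- The increment `(δ̂I)_{ts}` of the paper. -/
def semigroupIncrement (S : ℝ → W →L[ℝ] W) (I : ℝ → W) (t s : ℝ) : W :=
  I t - S (t - s) (I s)

variable {S : ℝ → W →L[ℝ] W} {I : ℝ → W}

theorem semigroupIncrement_eq_add
    (hSadd : ∀ t s : ℝ, 0 ≤ t → 0 ≤ s → S (t + s) = (S t).comp (S s))
    {u m v : ℝ} (hum : u ≤ m) (hmv : m ≤ v) :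
    semigroupIncrement S I v u =
      semigroupIncrement S I v m + S (v - m) (semigroupIncrement S I m u) := by
  have h := hSadd (v - m) (m - u) (sub_nonneg.2 hmv) (sub_nonneg.2 hum)
  rw [sub_add_sub_cancel] at h
  simp only [semigroupIncrement, h, ContinuousLinearMap.comp_apply, map_sub]
  abel

theorem semigroupIncrement_eq_sum_add
    (hSadd : ∀ t s : ℝ, 0 ≤ t → 0 ≤ s → S (t + s) = (S t).comp (S s))
    {q : ℕ → ℝ} (hq : Monotone q) {t : ℝ}
    (hqt : ∀ n, q n ≤ t) (N : ℕ) :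
    semigroupIncrement S I t (q 0) =
      ∑ n ∈ range N, S (t - q (n + 1)) (semigroupIncrement S I (q (n + 1)) (q n)) +
        semigroupIncrement S I t (q N) := by
  induction N with
  | zero => simp
  | succ N ih =>
    rw [ih, semigroupIncrement_eq_add hSadd (hq N.le_succ) (hqt (N + 1)), sum_range_succ]
    abel

theorem tendsto_sum_semigroupIncrement
    (hSadd : ∀ t s : ℝ, 0 ≤ t → 0 ≤ s → S (t + s) = (S t).comp (S s))
    {q : ℕ → ℝ} (hq : Monotone q) {t : ℝ} (hqt : ∀ n, q n ≤ t)
    (hlim : Tendsto (fun N => semigroupIncrement S I t (q N)) atTop (𝓝 0)) :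
    Tendsto (fun N => ∑ n ∈ range N, S (t - q (n + 1)) (semigroupIncrement S I (q (n + 1)) (q n)))
      atTop (𝓝 (semigroupIncrement S I t (q 0))) := by
  have h := (tendsto_const_nhds (x := semigroupIncrement S I t (q 0))).sub hlim
  rw [sub_zero] at h
  refine h.congr fun N => ?_
  rw [semigroupIncrement_eq_sum_add hSadd hq hqt N, add_sub_cancel_right]

theorem tendsto_semigroupIncrement_dyadicPoint {s t A α : ℝ} (hst : s ≤ t) (hα : 0 < α)
    (hA : ∀ u v, s ≤ u → u ≤ v → v ≤ t → ‖semigroupIncrement S I v u‖ ≤ A * (v - u) ^ α) :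
    Tendsto (fun N => semigroupIncrement S I t (dyadicPoint s t N)) atTop (𝓝 0) := by
  have hgeom : Tendsto (fun N : ℕ => A * ((t - s) ^ α * ((2 : ℝ) ^ α)⁻¹ ^ N)) atTop (𝓝 0) := by
    simpa using ((tendsto_pow_atTop_nhds_zero_of_lt_one (by positivity)
      (inv_lt_one_of_one_lt₀ (Real.one_lt_rpow one_lt_two hα))).const_mul ((t - s) ^ α)).const_mul A
  refine squeeze_zero_norm (fun N => ?_) hgeom
  rw [← div_two_pow_rpow (sub_nonneg.2 hst), ← sub_dyadicPoint]
  exact hA _ _ (le_dyadicPoint hst N) (dyadicPoint_le hst N) le_rfl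

theorem exists_preimage_semigroupIncrement_norm_le
    {E : Type*} [NormedAddCommGroup E] [NormedSpace ℝ E] [CompleteSpace E]
    (hSadd : ∀ t s : ℝ, 0 ≤ t → 0 ≤ s → S (t + s) = (S t).comp (S s))
    {s t A α ε C₀ : ℝ} (hst : s < t)
    (hA : ∀ u v, s ≤ u → u ≤ v → v ≤ t → ‖semigroupIncrement S I v u‖ ≤ A * (v - u) ^ α)
    (hε0 : 0 ≤ ε) (hεα : ε < α) (ι : E →L[ℝ] W) (SE : ℝ → W → E) (hC₀ : 0 ≤ C₀)
    (hSE : ∀ τ, 0 < τ → τ ≤ t - s → ∀ x, ι (SE τ x) = S τ x)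
    (hSEbd : ∀ τ, 0 < τ → τ ≤ t - s → ∀ x, ‖SE τ x‖ ≤ C₀ * τ ^ (-ε) * ‖x‖) :
    ∃ e, ι e = semigroupIncrement S I t s ∧
      ‖e‖ ≤ C₀ * A * ((2 : ℝ) ^ (α - ε) - 1)⁻¹ * (t - s) ^ (α - ε) := by
  set q := dyadicPoint s t
  set r : ℝ := ((2 : ℝ) ^ (α - ε))⁻¹ with hr
  have hr1 : 1 < (2 : ℝ) ^ (α - ε) := Real.one_lt_rpow one_lt_two (sub_pos.2 hεα)
  have hgap_pos (n : ℕ) : 0 < (t - s) / 2 ^ (n + 1) := div_pos (sub_pos.2 hst) (by positivity)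
  have hgap_le (n : ℕ) : (t - s) / 2 ^ (n + 1) ≤ t - s :=
    div_le_self (sub_nonneg.2 hst.le) (one_le_pow₀ one_le_two)
  have hterm (n : ℕ) : ‖SE ((t - s) / 2 ^ (n + 1)) (semigroupIncrement S I (q (n + 1)) (q n))‖ ≤
      C₀ * A * (t - s) ^ (α - ε) * r * r ^ n := by
    set τ := (t - s) / 2 ^ (n + 1)
    have hx := hA _ _ (le_dyadicPoint hst.le n) (monotone_dyadicPoint hst.le n.le_succ)
      (dyadicPoint_le hst.le (n + 1))
    rw [dyadicPoint_succ_sub] at hx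
    calc _ ≤ C₀ * τ ^ (-ε) * ‖semigroupIncrement S I (q (n + 1)) (q n)‖ :=
          hSEbd τ (hgap_pos n) (hgap_le n) _
      _ ≤ C₀ * τ ^ (-ε) * (A * τ ^ α) :=
          mul_le_mul_of_nonneg_left hx (mul_nonneg hC₀ (by positivity))
      _ = C₀ * A * τ ^ (α - ε) := by
          rw [sub_eq_add_neg, Real.rpow_add (hgap_pos n)]; ring
      _ = _ := by rw [div_two_pow_rpow (sub_nonneg.2 hst.le), pow_succ]; ring
  have hsum : HasSum (fun n => C₀ * A * (t - s) ^ (α - ε) * r * r ^ n)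
      (C₀ * A * ((2 : ℝ) ^ (α - ε) - 1)⁻¹ * (t - s) ^ (α - ε)) := by
    have hsum_eq : C₀ * A * (t - s) ^ (α - ε) * r * (1 - r)⁻¹ =
        C₀ * A * ((2 : ℝ) ^ (α - ε) - 1)⁻¹ * (t - s) ^ (α - ε) := by
      have : (2 : ℝ) ^ (α - ε) - 1 ≠ 0 := (sub_pos.2 hr1).ne'
      rw [hr]
      field_simp
    exact hsum_eq ▸ (hasSum_geometric_of_lt_one (by positivity)
      (inv_lt_one_of_one_lt₀ hr1)).mul_left (C₀ * A * (t - s) ^ (α - ε) * r)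
  have hlim := tendsto_sum_semigroupIncrement hSadd (monotone_dyadicPoint hst.le)
    (dyadicPoint_le hst.le) (tendsto_semigroupIncrement_dyadicPoint hst.le (by linarith) hA)
  rw [dyadicPoint_zero] at hlim
  refine ι.exists_apply_eq_norm_le_of_tendsto_sum hterm hsum
    (hlim.congr fun N => sum_congr rfl fun n _ => ?_)
  rw [hSE _ (hgap_pos n) (hgap_le n), sub_dyadicPoint]

end SemigroupIncrement

theorem sewing_map_fractional_domain_estimate_general
    {W E : Type*} [NormedAddCommGroup W] [NormedSpace ℝ W]
    [NormedAddCommGroup E] [NormedSpace ℝ E] [CompleteSpace E]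
    (T : ℝ)
    (S : ℝ → W →L[ℝ] W)
    (hSadd : ∀ t s : ℝ, 0 ≤ t → 0 ≤ s → S (t + s) = (S t).comp (S s))
    (c₁ c₂ α : ℝ) (hc₁ : 0 ≤ c₁) (hc₂ : 0 ≤ c₂)
    -- `I` is the sewing map of `Ξ` provided by the Sewing Lemma:
    (I : ℝ → W)
    (CI : ℝ)
    (hIbd1 : ∀ s t : ℝ, 0 ≤ s → s ≤ t → t ≤ T →
      ‖I t - S (t - s) (I s)‖ ≤ CI * (c₁ + c₂) * (t - s) ^ α)
    -- the fractional domain `D_ε` structure: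
    (ε : ℝ) (hε0 : 0 ≤ ε) (hεα : ε < α)
    (ι : E →L[ℝ] W)
    (C₀ : ℝ) (hC₀ : 0 ≤ C₀)
    (SE : ℝ → W →ₗ[ℝ] E)
    (hSE : ∀ t : ℝ, 0 < t → t ≤ T → ∀ x : W, ι (SE t x) = S t x)
    (hSEbd : ∀ t : ℝ, 0 < t → t ≤ T → ∀ x : W, ‖SE t x‖ ≤ C₀ * t ^ (-ε) * ‖x‖) :
    ∃ C : ℝ, 0 ≤ C ∧ ∀ s t : ℝ, 0 ≤ s → s < t → t ≤ T →
      ∃ e : E, ι e = I t - S (t - s) (I s) ∧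
        ‖e‖ ≤ C * (c₁ + c₂) * (t - s) ^ (α - ε) := by
  have hγ : 0 < (2 : ℝ) ^ (α - ε) - 1 := sub_pos.2 (Real.one_lt_rpow one_lt_two (sub_pos.2 hεα))
  refine ⟨C₀ * max CI 0 * ((2 : ℝ) ^ (α - ε) - 1)⁻¹,
    mul_nonneg (mul_nonneg hC₀ (le_max_right _ _)) (inv_nonneg.2 hγ.le),
    fun s t hs hst htT => ?_⟩
  have hA (u v : ℝ) (hu : s ≤ u) (huv : u ≤ v) (hv : v ≤ t) :
      ‖semigroupIncrement S I v u‖ ≤ max CI 0 * (c₁ + c₂) * (v - u) ^ α :=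
    (hIbd1 u v (hs.trans hu) huv (hv.trans htT)).trans <| mul_le_mul_of_nonneg_right
      (mul_le_mul_of_nonneg_right (le_max_left _ _) (add_nonneg hc₁ hc₂))
      (Real.rpow_nonneg (sub_nonneg.2 huv) _)
  obtain ⟨e, hιe, he⟩ := exists_preimage_semigroupIncrement_norm_le hSadd hst hA hε0 hεα ι
    (fun τ x => SE τ x) hC₀ (fun τ hτ hτt => hSE τ hτ (by linarith))
    (fun τ hτ hτt => hSEbd τ hτ (by linarith))
  exact ⟨e, hιe, he.trans_eq (by ring)⟩

/-- The sewing increments take values in the fractional domain `D_ε`,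
with the corresponding estimate. -/
theorem sewing_map_fractional_domain_estimate
    {W E : Type*} [NormedAddCommGroup W] [NormedSpace ℝ W] [CompleteSpace W]
    [NormedAddCommGroup E] [NormedSpace ℝ E] [CompleteSpace E]
    (T : ℝ) (hT : 0 < T)
    (S : ℝ → W →L[ℝ] W)
    (hS0 : S 0 = ContinuousLinearMap.id ℝ W)
    (hSadd : ∀ t s : ℝ, 0 ≤ t → 0 ≤ s → S (t + s) = (S t).comp (S s))
    (cS : ℝ) (hScS : ∀ t : ℝ, 0 ≤ t → t ≤ T → ‖S t‖ ≤ cS)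
    (Ξ : ℝ → ℝ → W)
    (hΞcont : ContinuousOn (fun p : ℝ × ℝ => Ξ p.1 p.2)
      {p : ℝ × ℝ | 0 ≤ p.2 ∧ p.2 ≤ p.1 ∧ p.1 ≤ T})
    (c₁ c₂ α β ρ : ℝ) (hc₁ : 0 ≤ c₁) (hc₂ : 0 ≤ c₂)
    (hα0 : 0 ≤ α) (hα1 : α ≤ 1) (hβ0 : 0 ≤ β) (hβ1 : β ≤ 1) (hρ : 1 < ρ)
    (hαβρ : α + β ≤ ρ)
    (hΞ1 : ∀ u v : ℝ, 0 ≤ u → u ≤ v → v ≤ T → ‖Ξ v u‖ ≤ c₁ * (v - u) ^ α)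
    (hΞ2 : ∀ u m v : ℝ, 0 < u → u ≤ m → m ≤ v → v ≤ T →
      ‖Ξ v u - Ξ v m - S (v - m) (Ξ m u)‖ ≤ c₂ * u ^ (-β) * (v - u) ^ ρ)
    -- `I` is the sewing map of `Ξ` provided by the Sewing Lemma:
    (I : ℝ → W) (hIcont : ContinuousOn I (Set.Icc 0 T)) (hI0 : I 0 = 0)
    (CI : ℝ)
    (hIbd1 : ∀ s t : ℝ, 0 ≤ s → s ≤ t → t ≤ T →
      ‖I t - S (t - s) (I s)‖ ≤ CI * (c₁ + c₂) * (t - s) ^ α)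
    (hIbd2 : ∀ s t : ℝ, 0 < s → s ≤ t → t ≤ T →
      ‖I t - S (t - s) (I s) - Ξ t s‖ ≤ CI * c₂ * s ^ (-β) * (t - s) ^ ρ)
    -- the fractional domain `D_ε` structure:
    (ε : ℝ) (hε0 : 0 ≤ ε) (hεα : ε < α)
    (ι : E →L[ℝ] W) (hιinj : Function.Injective ι) (hιnorm : ∀ e : E, ‖ι e‖ ≤ ‖e‖)
    (C₀ : ℝ) (hC₀ : 0 ≤ C₀)
    (SE : ℝ → W →ₗ[ℝ] E)
    (hSE : ∀ t : ℝ, 0 < t → t ≤ T → ∀ x : W, ι (SE t x) = S t x)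
    (hSEbd : ∀ t : ℝ, 0 < t → t ≤ T → ∀ x : W, ‖SE t x‖ ≤ C₀ * t ^ (-ε) * ‖x‖) :
    ∃ C : ℝ, 0 ≤ C ∧ ∀ s t : ℝ, 0 ≤ s → s < t → t ≤ T →
      ∃ e : E, ι e = I t - S (t - s) (I s) ∧
        ‖e‖ ≤ C * (c₁ + c₂) * (t - s) ^ (α - ε) :=
  sewing_map_fractional_domain_estimate_general T S hSadd c₁ c₂ α hc₁ hc₂ I CI hIbd1 ε hε0 hεα ι C₀
    hC₀ SE hSE hSEbd
end

section
/- Let β ∈ [0,1] and suppose there are a real Banach space (E, ‖·‖_E), a continuous linear injection ι : E → W with ‖ι(e)‖ ≤ ‖e‖_E, a constant C₀, and for each t ∈ (0,T] a linear map S_E(t) : W → E with ι(S_E(t)x) = S(t)x and ‖S_E(t)x‖_E ≤ C₀ t^{−β}‖x‖ for all x ∈ W, together with a constant C₁ such that ‖S(h)(ι(e)) − ι(e)‖ ≤ C₁ h^β ‖e‖_E for all h ∈ [0,T], e ∈ E. Then there is a constant C depending only on c_S, C₀, C₁ and β such that for every x ∈ W: sup_{0≤t≤T} ‖S(t)x‖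 + sup_{0<s<t≤T} s^β ‖S(t)x − S(s)x‖/(t−s)^β ≤ C ‖x‖. -/
/-- Weighted Hölder bound `‖S(·)x‖_{β,β} ≤ C‖x‖` for an analytic semigroup. -/
theorem semigroup_weighted_holder_bound
    {W E : Type*} [NormedAddCommGroup W] [NormedSpace ℝ W]
    [NormedAddCommGroup E] [NormedSpace ℝ E]
    (T : ℝ) (hT : 0 < T)
    (S : ℝ → W →L[ℝ] W)
    (hS0 : S 0 = ContinuousLinearMap.id ℝ W)
    (hSadd : ∀ t s : ℝ, 0 ≤ t → 0 ≤ s → S (t + s) = (S t).comp (S s))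
    (cS : ℝ) (hScS : ∀ t : ℝ, 0 ≤ t → t ≤ T → ‖S t‖ ≤ cS)
    (β : ℝ) (hβ0 : 0 ≤ β) (hβ1 : β ≤ 1)
    -- the fractional domain `D_β` structure:
    (ι : E →L[ℝ] W) (hιinj : Function.Injective ι) (hιnorm : ∀ e : E, ‖ι e‖ ≤ ‖e‖)
    (C₀ : ℝ) (hC₀ : 0 ≤ C₀)
    (SE : ℝ → W →ₗ[ℝ] E)
    (hSE : ∀ t : ℝ, 0 < t → t ≤ T → ∀ x : W, ι (SE t x) = S t x)
    (hSEbd : ∀ t : ℝ, 0 < t → t ≤ T → ∀ x : W, ‖SE t x‖ ≤ C₀ * t ^ (-β) * ‖x‖)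
    (C₁ : ℝ) (hC₁ : 0 ≤ C₁)
    (hSId : ∀ h : ℝ, 0 ≤ h → h ≤ T → ∀ e : E, ‖S h (ι e) - ι e‖ ≤ C₁ * h ^ β * ‖e‖) :
    ∃ C : ℝ, 0 ≤ C ∧ ∀ x : W,
      ∀ t₁ s t : ℝ, 0 ≤ t₁ → t₁ ≤ T → 0 < s → s < t → t ≤ T →
        ‖S t₁ x‖ + s ^ β * (‖S t x - S s x‖ / (t - s) ^ β) ≤ C * ‖x‖ := by
  have hcS : 0 ≤ cS := le_trans (norm_nonneg _) (hScS 0 le_rfl hT.le)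
  refine ⟨cS + C₁ * C₀, by positivity, ?_⟩
  intro x t₁ s t ht₁0 ht₁T hs hst htT
  have hsT : s ≤ T := le_of_lt (lt_of_lt_of_le hst htT)
  have h1 : ‖S t₁ x‖ ≤ cS * ‖x‖ :=
    le_trans ((S t₁).le_opNorm x)
      (mul_le_mul_of_nonneg_right (hScS _ ht₁0 ht₁T) (norm_nonneg x))
  set e := SE s x with he
  have hιe : ι e = S s x := hSE s hs hsT x
  have hts : 0 < t - s := sub_pos.mpr hst
  have htsT : t - s ≤ T := by linarith
  have hdiff : S t x - S s x = S (t - s) (ι e) - ι e := by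
    rw [hιe]
    have hcomp : S t = (S (t - s)).comp (S s) := by
      have h := hSadd (t - s) s hts.le hs.le
      rw [sub_add_cancel] at h
      exact h
    rw [hcomp]; rfl
  have h2 : ‖S t x - S s x‖ ≤ C₁ * (t - s) ^ β * (C₀ * s ^ (-β) * ‖x‖) := by
    rw [hdiff]
    refine le_trans (hSId _ hts.le htsT e) ?_
    apply mul_le_mul_of_nonneg_left (hSEbd s hs hsT x)
    positivity
  have hpow : (0 : ℝ) < (t - s) ^ β := Real.rpow_pos_of_pos hts β
  have hspow : s ^ β * s ^ (-β) = 1 := by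
    rw [← Real.rpow_add hs, add_neg_cancel, Real.rpow_zero]
  have h3 : s ^ β * (‖S t x - S s x‖ / (t - s) ^ β) ≤ C₁ * C₀ * ‖x‖ := by
    have hdivle : ‖S t x - S s x‖ / (t - s) ^ β ≤ C₁ * (C₀ * s ^ (-β) * ‖x‖) := by
      rw [div_le_iff₀ hpow]
      calc ‖S t x - S s x‖ ≤ C₁ * (t - s) ^ β * (C₀ * s ^ (-β) * ‖x‖) := h2
        _ = C₁ * (C₀ * s ^ (-β) * ‖x‖) * (t - s) ^ β := by ring
    have hsb : (0 : ℝ) ≤ s ^ β := le_of_lt (Real.rpow_pos_of_pos hs β)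
    calc s ^ β * (‖S t x - S s x‖ / (t - s) ^ β)
        ≤ s ^ β * (C₁ * (C₀ * s ^ (-β) * ‖x‖)) :=
          mul_le_mul_of_nonneg_left hdivle hsb
      _ = C₁ * C₀ * ‖x‖ * (s ^ β * s ^ (-β)) := by ring
      _ = C₁ * C₀ * ‖x‖ := by rw [hspow, mul_one]
  calc ‖S t₁ x‖ + s ^ β * (‖S t x - S s x‖ / (t - s) ^ β)
      ≤ cS * ‖x‖ + C₁ * C₀ * ‖x‖ := add_le_add h1 h3
    _ = (cS + C₁ * C₀) * ‖x‖ := by ring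
end

section
/- Let V be a real separable Hilbert space, ω : [0,T] → V continuously differentiable with derivative ω', E : W → L(V,W) a continuous bilinear map (i.e. E ∈ L(W, L(V,W))), and x ∈ W. Define a_{ts}(E,x) := ∫_s^t S(t−r)( (E(S(r−s)x))(ω'(r)) ) dr (Bochner integral) for (t,s) ∈ Δ_T. Then for all 0 ≤ s ≤ τ ≤ t ≤ T one has (δ̂₂a)_{tτs}(E,x) := a_{ts}(E,x) − a_{tτ}(E,x) − S(t−τ)(a_{τs}(E,x)) = a_{tτ}(E, S(τ−s)x − x). -/
/-!
Split `∫_s^t` at `τ`. On `[s, τ]` the semigroup law gives `S(t-r) = S(t-τ) S(τ-r)`, so that piece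
is exactly `S(t-τ) a_{τs}`. On `[τ, t]` it gives `S(r-τ)(S(τ-s)x - x) = S(r-s)x - S(r-τ)x`, so the
remaining piece minus `a_{tτ}(E,x)` is `a_{tτ}(E, S(τ-s)x - x)` by linearity. Continuity of the
integrands, needed for all three integrals to exist, comes from the uniform boundedness principle.
-/

open Set MeasureTheory intervalIntegral

section StronglyContinuous

variable {α 𝕜 E F : Type*} [TopologicalSpace α] [NontriviallyNormedField 𝕜]
  [NormedAddCommGroup E] [NormedSpace 𝕜 E] [NormedAddCommGroup F] [NormedSpace 𝕜 F]
  {f : α → E →L[𝕜] F} {g : α → E} {K : Set α}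

theorem ContinuousOn.clm_apply_of_norm_le {M : ℝ} (hfK : ∀ y, ContinuousOn (fun r => f r y) K)
    (hM : ∀ r ∈ K, ‖f r‖ ≤ M) (hg : ContinuousOn g K) : ContinuousOn (fun r => f r (g r)) K := by
  intro r₀ hr₀
  have hsmall : Filter.Tendsto (fun r => f r (g r - g r₀)) (nhdsWithin r₀ K) (nhds 0) := by
    have hgr : Filter.Tendsto (fun r => M * ‖g r - g r₀‖) (nhdsWithin r₀ K) (nhds 0) := by
      simpa using ((hg r₀ hr₀).sub_const (g r₀)).norm.const_mul M
    refine squeeze_zero_norm' ?_ hgr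
    filter_upwards [self_mem_nhdsWithin] with r hr
    exact (f r).le_of_opNorm_le (hM r hr) _
  have := hsmall.add (hfK (g r₀) r₀ hr₀)
  simp only [← map_add, sub_add_cancel, zero_add] at this
  exact this

theorem ContinuousOn.clm_apply_of_isCompact [CompleteSpace E] (hK : IsCompact K)
    (hfK : ∀ y, ContinuousOn (fun r => f r y) K) (hg : ContinuousOn g K) :
    ContinuousOn (fun r => f r (g r)) K := by
  obtain ⟨M, hM⟩ := banach_steinhaus (g := fun r : K => f r) fun y => by
    obtain ⟨C, hC⟩ := hK.exists_bound_of_continuousOn (hfK y)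
    exact ⟨C, fun r => hC r r.2⟩
  exact .clm_apply_of_norm_le hfK (fun r hr => hM ⟨r, hr⟩) hg

end StronglyContinuous

section Semigroup

variable {W V : Type*} [NormedAddCommGroup W] [NormedSpace ℝ W] [NormedAddCommGroup V]
  [NormedSpace ℝ V] {S : ℝ → W →L[ℝ] W}

theorem intervalIntegrable_semigroup_apply_bilin [CompleteSpace W]
    (hScont : ∀ x : W, Continuous fun t => S t x) (E : W →L[ℝ] V →L[ℝ] W) (ω' : ℝ → V) (y : W)
    (u b : ℝ) {a c : ℝ} (hω' : ContinuousOn ω' (uIcc a c)) :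
    IntervalIntegrable (fun r => S (b - r) (E (S (r - u) y) (ω' r))) volume a c := by
  refine ContinuousOn.intervalIntegrable (.clm_apply_of_isCompact isCompact_uIcc
    (fun z => ((hScont z).comp (continuous_sub_left b)).continuousOn) ?_)
  exact (E.continuous.comp ((hScont y).comp (continuous_sub_right u))).continuousOn.clm_apply hω'

variable (hSadd : ∀ t s : ℝ, 0 ≤ t → 0 ≤ s → S (t + s) = (S t).comp (S s))
include hSadd

theorem semigroup_sub_apply {s τ r : ℝ} (hsτ : s ≤ τ) (hτr : τ ≤ r) (x : W) :
    S (r - τ) (S (τ - s) x) = S (r - s) x := by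
  rw [← ContinuousLinearMap.comp_apply, ← hSadd _ _ (by linarith) (by linarith)]
  ring_nf

theorem semigroup_apply_intervalIntegral [CompleteSpace W] {f : ℝ → W} {a b t : ℝ} (hab : a ≤ b)
    (hbt : b ≤ t)
    (hf : IntervalIntegrable (fun r => S (b - r) (f r)) volume a b) :
    S (t - b) (∫ r in a..b, S (b - r) (f r)) = ∫ r in a..b, S (t - r) (f r) := by
  rw [← (S (t - b)).intervalIntegral_comp_comm hf]
  refine integral_congr fun r hr => ?_
  rw [uIcc_of_le hab] at hr
  exact semigroup_sub_apply hSadd hr.2 hbt (f r)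

end Semigroup

theorem a_process_algebraic_relation_general
    {W V : Type*} [NormedAddCommGroup W] [NormedSpace ℝ W] [CompleteSpace W]
    [NormedAddCommGroup V] [InnerProductSpace ℝ V]
    (T : ℝ)
    (S : ℝ → W →L[ℝ] W)
    (hSadd : ∀ t s : ℝ, 0 ≤ t → 0 ≤ s → S (t + s) = (S t).comp (S s))
    (hScont : ∀ x : W, Continuous fun t => S t x)
    (ω' : ℝ → V)
    (hω' : ContinuousOn ω' (Set.Icc 0 T))
    (E : W →L[ℝ] V →L[ℝ] W) (x : W)
    (s τ t : ℝ) (hs : 0 ≤ s) (hsτ : s ≤ τ) (hτt : τ ≤ t) (htT : t ≤ T) :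
    (∫ r in s..t, S (t - r) ((E (S (r - s) x)) (ω' r))) -
      (∫ r in τ..t, S (t - r) ((E (S (r - τ) x)) (ω' r))) -
      S (t - τ) (∫ r in s..τ, S (τ - r) ((E (S (r - s) x)) (ω' r))) =
    ∫ r in τ..t, S (t - r) ((E (S (r - τ) (S (τ - s) x - x))) (ω' r)) := by
  have hω'_sτ : ContinuousOn ω' (uIcc s τ) := hω'.mono <| by
    rw [uIcc_of_le hsτ]; exact Icc_subset_Icc hs (hτt.trans htT)
  have hω'_τt : ContinuousOn ω' (uIcc τ t) := hω'.mono <| by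
    rw [uIcc_of_le hτt]; exact Icc_subset_Icc (hs.trans hsτ) htT
  have hint := intervalIntegrable_semigroup_apply_bilin hScont E ω' x
  have hincrement : (∫ r in τ..t, S (t - r) ((E (S (r - τ) (S (τ - s) x - x))) (ω' r))) =
      ∫ r in τ..t,
        (S (t - r) ((E (S (r - s) x)) (ω' r)) - S (t - r) ((E (S (r - τ) x)) (ω' r))) := by
    refine integral_congr fun r hr => ?_
    rw [uIcc_of_le hτt] at hr
    simp only [map_sub, semigroup_sub_apply hSadd hsτ hr.1, sub_apply]
  rw [← integral_add_adjacent_intervals (hint s t hω'_sτ) (hint s t hω'_τt),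
    semigroup_apply_intervalIntegral hSadd hsτ hτt (hint s τ hω'_sτ), hincrement,
    integral_sub (hint s t hω'_τt) (hint τ t hω'_τt)]
  abel

/-- Algebraic relation `(δ̂₂a)_{tτs}(E,x) = a_{tτ}(E, S(τ−s)x − x)`
for the supporting process `a` of a smooth path. -/
theorem a_process_algebraic_relation
    {W V : Type*} [NormedAddCommGroup W] [NormedSpace ℝ W] [CompleteSpace W]
    [NormedAddCommGroup V] [InnerProductSpace ℝ V] [CompleteSpace V]
    [TopologicalSpace.SeparableSpace V]
    (T : ℝ) (hT : 0 < T)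
    (S : ℝ → W →L[ℝ] W)
    (hS0 : S 0 = ContinuousLinearMap.id ℝ W)
    (hSadd : ∀ t s : ℝ, 0 ≤ t → 0 ≤ s → S (t + s) = (S t).comp (S s))
    (hScont : ∀ x : W, Continuous fun t => S t x)
    (ω ω' : ℝ → V)
    (hω : ∀ r ∈ Set.Icc (0 : ℝ) T, HasDerivWithinAt ω (ω' r) (Set.Icc 0 T) r)
    (hω' : ContinuousOn ω' (Set.Icc 0 T))
    (E : W →L[ℝ] V →L[ℝ] W) (x : W)
    (s τ t : ℝ) (hs : 0 ≤ s) (hsτ : s ≤ τ) (hτt : τ ≤ t) (htT : t ≤ T) :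
    (∫ r in s..t, S (t - r) ((E (S (r - s) x)) (ω' r))) -
      (∫ r in τ..t, S (t - r) ((E (S (r - τ) x)) (ω' r))) -
      S (t - τ) (∫ r in s..τ, S (τ - r) ((E (S (r - s) x)) (ω' r))) =
    ∫ r in τ..t, S (t - r) ((E (S (r - τ) (S (τ - s) x - x))) (ω' r)) :=
  a_process_algebraic_relation_general T S hSadd hScont ω' hω' E x s τ t hs hsτ hτt htT
end

section
/- Let a : Δ_T → L(W,W) be a family of bounded linear operators satisfying, for all 0 ≤ s ≤ τ ≤ t ≤ T and all x ∈ W, the relation a_{ts}(x) − a_{tτ}(x) − S(t−τ)(a_{τs}(x)) = a_{tτ}(S(τ−s)x − x). Then for every 0 ≤ s ≤ t ≤ T, every partition s = t₀ < t₁ < ⋯ < t_n = t of [s,t], and every x ∈ W, one has a_{ts}(x) = ∑_{k=0}^{n−1} S(t − t_{k+1})( a_{t_{k+1} t_k}( S(t_k − s) x ) ). -/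
/-!
Chen's relation, rearranged, says that `a_{ts}` splits at any intermediate time `τ` as
`a_{ts} = S(t-τ) a_{τs} + a_{tτ} S(τ-s)`. Splitting at the last interior point of the partition
and inducting on the number of subintervals telescopes this into the claimed sum, the semigroup
law merging the operators `S(t-τ) S(τ-t_{k+1})` into `S(t-t_{k+1})`.
-/

section ChenRelation

variable {W : Type*} [AddCommGroup W] [Module ℝ W] [TopologicalSpace W]
  {T : ℝ} {S : ℝ → W →L[ℝ] W} {a : ℝ → ℝ → W →L[ℝ] W}

theorem semigroup_apply_apply
    (hSadd : ∀ t s : ℝ, 0 ≤ t → 0 ≤ s → S (t + s) = (S t).comp (S s))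
    {r τ t : ℝ} (hrτ : r ≤ τ) (hτt : τ ≤ t) (y : W) :
    S (t - τ) (S (τ - r) y) = S (t - r) y := by
  rw [← ContinuousLinearMap.comp_apply, ← hSadd _ _ (sub_nonneg.2 hτt) (sub_nonneg.2 hrτ),
    sub_add_sub_cancel]

variable (hChen : ∀ s τ t : ℝ, 0 ≤ s → s ≤ τ → τ ≤ t → t ≤ T → ∀ x : W,
  a t s x - a t τ x - S (t - τ) (a τ s x) = a t τ (S (τ - s) x - x))
include hChen

theorem chen_apply_self (hS0 : S 0 = ContinuousLinearMap.id ℝ W)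
    {t : ℝ} (ht : 0 ≤ t) (htT : t ≤ T) (x : W) : a t t x = 0 := by
  simpa [hS0] using hChen t t t ht le_rfl le_rfl htT x

theorem chen_split {s τ t : ℝ} (hs : 0 ≤ s) (hsτ : s ≤ τ) (hτt : τ ≤ t) (htT : t ≤ T) (x : W) :
    a t s x = S (t - τ) (a τ s x) + a t τ (S (τ - s) x) := by
  have h := hChen s τ t hs hsτ hτt htT x
  rw [map_sub] at h
  linear_combination (norm := module) h

theorem chen_partition_sum (hS0 : S 0 = ContinuousLinearMap.id ℝ W)
    (hSadd : ∀ t s : ℝ, 0 ≤ t → 0 ≤ s → S (t + s) = (S t).comp (S s))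
    (n : ℕ) {u : ℕ → ℝ} (hu0 : 0 ≤ u 0) (hmono : MonotoneOn u (Set.Iic n)) (hunT : u n ≤ T)
    (x : W) :
    a (u n) (u 0) x = ∑ k ∈ Finset.range n,
      S (u n - u (k + 1)) (a (u (k + 1)) (u k) (S (u k - u 0) x)) := by
  induction n with
  | zero => simpa using chen_apply_self hChen hS0 hu0 hunT x
  | succ n ih =>
    have hle : ∀ i ≤ n + 1, ∀ j ≤ n + 1, i ≤ j → u i ≤ u j := fun i hi j hj hij =>
      hmono (Set.mem_Iic.2 hi) (Set.mem_Iic.2 hj) hij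
    have hlast : u n ≤ u (n + 1) := hle n n.le_succ _ le_rfl n.le_succ
    rw [chen_split hChen hu0 (hle 0 (Nat.zero_le _) n n.le_succ (Nat.zero_le n)) hlast hunT,
      ih (hmono.mono (Set.Iic_subset_Iic.2 n.le_succ)) (hlast.trans hunT), map_sum,
      Finset.sum_range_succ, sub_self, hS0, ContinuousLinearMap.id_apply]
    congr 1
    refine Finset.sum_congr rfl fun k hk => ?_
    have hk : k + 1 ≤ n := Finset.mem_range.1 hk
    exact semigroup_apply_apply hSadd (hle _ (hk.trans n.le_succ) n n.le_succ hk) hlast _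

end ChenRelation

theorem a_partition_sum_identity_general
    {W : Type*} [NormedAddCommGroup W] [NormedSpace ℝ W]
    (T : ℝ)
    (S : ℝ → W →L[ℝ] W)
    (hS0 : S 0 = ContinuousLinearMap.id ℝ W)
    (hSadd : ∀ t s : ℝ, 0 ≤ t → 0 ≤ s → S (t + s) = (S t).comp (S s))
    (a : ℝ → ℝ → W →L[ℝ] W)
    (hChen : ∀ s τ t : ℝ, 0 ≤ s → s ≤ τ → τ ≤ t → t ≤ T → ∀ x : W,
      a t s x - a t τ x - S (t - τ) (a τ s x) = a t τ (S (τ - s) x - x))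
    (s t : ℝ) (hs : 0 ≤ s) (htT : t ≤ T)
    (n : ℕ) (u : ℕ → ℝ) (hu0 : u 0 = s) (hun : u n = t)
    (hmono : ∀ k < n, u k < u (k + 1))
    (x : W) :
    a t s x = ∑ k ∈ Finset.range n,
      S (t - u (k + 1)) (a (u (k + 1)) (u k) (S (u k - s) x)) := by
  subst hu0 hun
  have hmonoOn : MonotoneOn u (Set.Iic n) :=
    monotoneOn_of_le_add_one Set.ordConnected_Iic fun k _ _ hk =>
      (hmono k (Nat.lt_of_succ_le (Set.mem_Iic.1 hk))).le
  exact chen_partition_sum hChen hS0 hSadd n hs hmonoOn htT x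

/-- Partition identity `a_{ts}(x) = ∑ S(t−t_{k+1}) a_{t_{k+1}t_k}(S(t_k−s)x)`. -/
theorem a_partition_sum_identity
    {W : Type*} [NormedAddCommGroup W] [NormedSpace ℝ W]
    (T : ℝ) (hT : 0 < T)
    (S : ℝ → W →L[ℝ] W)
    (hS0 : S 0 = ContinuousLinearMap.id ℝ W)
    (hSadd : ∀ t s : ℝ, 0 ≤ t → 0 ≤ s → S (t + s) = (S t).comp (S s))
    (a : ℝ → ℝ → W →L[ℝ] W)
    (hChen : ∀ s τ t : ℝ, 0 ≤ s → s ≤ τ → τ ≤ t → t ≤ T → ∀ x : W,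
      a t s x - a t τ x - S (t - τ) (a τ s x) = a t τ (S (τ - s) x - x))
    (s t : ℝ) (hs : 0 ≤ s) (hst : s ≤ t) (htT : t ≤ T)
    (n : ℕ) (u : ℕ → ℝ) (hu0 : u 0 = s) (hun : u n = t)
    (hmono : ∀ k < n, u k < u (k + 1))
    (x : W) :
    a t s x = ∑ k ∈ Finset.range n,
      S (t - u (k + 1)) (a (u (k + 1)) (u k) (S (u k - s) x)) :=
  a_partition_sum_identity_general T S hS0 hSadd a hChen s t hs htT n u hu0 hun hmono x
end

section
/- Let ρ > 1, c ≥ 0 and let κ : [0,T] → W be continuous with κ(0) = 0 and |(δ̂κ)_{ts}| ≤ c (t−s)^ρ for all (t,s) ∈ Δ_T. Then κ(t) = 0 for all t ∈ [0,T]. -/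
/-!
Cut `[0, t]` into `n` equal steps of length `h = t / n`. Propagating each increment to time `t`
with the semigroup telescopes to `κ t - S t (κ 0) = ∑ᵢ S (t - tᵢ₊₁) (δ̂κ)_{tᵢ₊₁ tᵢ}`, so
`‖κ t‖ ≤ n · c_S · c · h ^ ρ = c_S · c · t ^ ρ · n ^ (1 - ρ)`, which tends to `0` since `ρ > 1`.
-/

open Finset Filter Topology

/-- The paper's `(δ̂κ)_{ts}`. -/
def hatDelta {W : Type*} [NormedAddCommGroup W] [NormedSpace ℝ W]
    (S : ℝ → W →L[ℝ] W) (κ : ℝ → W) (t s : ℝ) : W :=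
  κ t - S (t - s) (κ s)

section Semigroup

variable {W : Type*} [NormedAddCommGroup W] [NormedSpace ℝ W] {S : ℝ → W →L[ℝ] W}

theorem sub_semigroup_apply_eq_sum_hatDelta (hS0 : S 0 = ContinuousLinearMap.id ℝ W)
    (hSadd : ∀ t s : ℝ, 0 ≤ t → 0 ≤ s → S (t + s) = (S t).comp (S s))
    (κ : ℝ → W) {τ : ℕ → ℝ} (hτ : Monotone τ) (n : ℕ) :
    κ (τ n) - S (τ n - τ 0) (κ (τ 0)) =
      ∑ i ∈ range n, S (τ n - τ (i + 1)) (hatDelta S κ (τ (i + 1)) (τ i)) := by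
  set f : ℕ → W := fun i => S (τ n - τ i) (κ (τ i))
  have hstep : ∀ i ∈ range n,
      f (i + 1) - f i = S (τ n - τ (i + 1)) (hatDelta S κ (τ (i + 1)) (τ i)) := by
    intro i hi
    have hsplit : S (τ n - τ i) = (S (τ n - τ (i + 1))).comp (S (τ (i + 1) - τ i)) := by
      rw [← hSadd _ _ (sub_nonneg.2 (hτ (mem_range.1 hi)))
        (sub_nonneg.2 (hτ i.le_succ))]
      ring_nf
    simp only [f, hatDelta, hsplit, map_sub, ContinuousLinearMap.comp_apply]
  rw [← sum_congr rfl hstep, sum_range_sub]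
  simp [f, hS0]

theorem norm_sub_semigroup_apply_le_mul_natCast_rpow (hS0 : S 0 = ContinuousLinearMap.id ℝ W)
    (hSadd : ∀ t s : ℝ, 0 ≤ t → 0 ≤ s → S (t + s) = (S t).comp (S s))
    {T cS : ℝ} (hScS : ∀ t : ℝ, 0 ≤ t → t ≤ T → ‖S t‖ ≤ cS)
    {ρ c : ℝ} {κ : ℝ → W}
    (hκ : ∀ s t : ℝ, 0 ≤ s → s ≤ t → t ≤ T → ‖hatDelta S κ t s‖ ≤ c * (t - s) ^ ρ)
    {t : ℝ} (ht0 : 0 ≤ t) (htT : t ≤ T) {n : ℕ} (hn : 0 < n) :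
    ‖κ t - S t (κ 0)‖ ≤ cS * c * t ^ ρ * (n : ℝ) ^ (1 - ρ) := by
  have hn' : (0 : ℝ) < n := Nat.cast_pos.2 hn
  set h := t / n
  have hh : 0 ≤ h := div_nonneg ht0 hn'.le
  set τ : ℕ → ℝ := fun i => i * h
  have hτ : Monotone τ := fun i j hij => mul_le_mul_of_nonneg_right (Nat.cast_le.2 hij) hh
  have hτn : τ n = t := mul_div_cancel₀ t hn'.ne'
  have hτ0 : τ 0 = 0 := by simp [τ]
  have hcS : 0 ≤ cS := (norm_nonneg _).trans (hScS 0 le_rfl (ht0.trans htT))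
  have hterm : ∀ i ∈ range n,
      ‖S (τ n - τ (i + 1)) (hatDelta S κ (τ (i + 1)) (τ i))‖ ≤ cS * (c * h ^ ρ) := by
    intro i hi
    have hle : τ (i + 1) ≤ τ n := hτ (mem_range.1 hi)
    have hgap : τ (i + 1) - τ i = h := by simp only [τ]; push_cast; ring
    calc ‖S (τ n - τ (i + 1)) (hatDelta S κ (τ (i + 1)) (τ i))‖
        ≤ ‖S (τ n - τ (i + 1))‖ * ‖hatDelta S κ (τ (i + 1)) (τ i)‖ := (S _).le_opNorm _
      _ ≤ cS * (c * h ^ ρ) := by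
        gcongr
        · exact hScS _ (sub_nonneg.2 hle) (by linarith [hτ (Nat.zero_le (i + 1))])
        · simpa [hgap] using
            hκ _ _ (by positivity) (hτ i.le_succ) (hle.trans (hτn ▸ htT))
  calc ‖κ t - S t (κ 0)‖
      = ‖∑ i ∈ range n, S (τ n - τ (i + 1)) (hatDelta S κ (τ (i + 1)) (τ i))‖ := by
        rw [← sub_semigroup_apply_eq_sum_hatDelta hS0 hSadd κ hτ, hτn, hτ0, sub_zero]
    _ ≤ n * (cS * (c * h ^ ρ)) := by simpa using norm_sum_le_of_le _ hterm
    _ = cS * c * t ^ ρ * (n : ℝ) ^ (1 - ρ) := by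
        rw [Real.div_rpow ht0 hn'.le, Real.rpow_sub hn', Real.rpow_one]
        field_simp

end Semigroup

theorem nonpos_of_forall_le_mul_natCast_rpow {x C ρ : ℝ} (hρ : 1 < ρ)
    (h : ∀ n : ℕ, 0 < n → x ≤ C * (n : ℝ) ^ (1 - ρ)) : x ≤ 0 := by
  have hlim : Tendsto (fun n : ℕ => C * (n : ℝ) ^ (1 - ρ)) atTop (𝓝 0) := by
    have := (tendsto_rpow_neg_atTop (sub_pos.2 hρ)).comp tendsto_natCast_atTop_atTop
    simpa using this.const_mul C
  exact ge_of_tendsto hlim ((eventually_gt_atTop 0).mono h)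

theorem kappa_eq_zero_of_hat_delta_small_general
    {W : Type*} [NormedAddCommGroup W] [NormedSpace ℝ W]
    (T : ℝ)
    (S : ℝ → W →L[ℝ] W)
    (hS0 : S 0 = ContinuousLinearMap.id ℝ W)
    (hSadd : ∀ t s : ℝ, 0 ≤ t → 0 ≤ s → S (t + s) = (S t).comp (S s))
    (cS : ℝ) (hScS : ∀ t : ℝ, 0 ≤ t → t ≤ T → ‖S t‖ ≤ cS)
    (ρ c : ℝ) (hρ : 1 < ρ)
    (κ : ℝ → W) (hκ0 : κ 0 = 0)
    (hκ : ∀ s t : ℝ, 0 ≤ s → s ≤ t → t ≤ T →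
      ‖κ t - S (t - s) (κ s)‖ ≤ c * (t - s) ^ ρ) :
    ∀ t : ℝ, 0 ≤ t → t ≤ T → κ t = 0 := by
  intro t ht0 htT
  have hbound : ∀ n : ℕ, 0 < n → ‖κ t‖ ≤ cS * c * t ^ ρ * (n : ℝ) ^ (1 - ρ) := fun n hn => by
    simpa [hκ0] using
      norm_sub_semigroup_apply_le_mul_natCast_rpow hS0 hSadd hScS hκ ht0 htT hn
  exact norm_le_zero_iff.1 (nonpos_of_forall_le_mul_natCast_rpow hρ hbound)

/-- If `κ(0) = 0` and `|(δ̂κ)_{ts}| ≤ c (t−s)^ρ` with `ρ > 1`, then `κ ≡ 0`. -/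
theorem kappa_eq_zero_of_hat_delta_small
    {W : Type*} [NormedAddCommGroup W] [NormedSpace ℝ W]
    (T : ℝ) (hT : 0 < T)
    (S : ℝ → W →L[ℝ] W)
    (hS0 : S 0 = ContinuousLinearMap.id ℝ W)
    (hSadd : ∀ t s : ℝ, 0 ≤ t → 0 ≤ s → S (t + s) = (S t).comp (S s))
    (cS : ℝ) (hScS : ∀ t : ℝ, 0 ≤ t → t ≤ T → ‖S t‖ ≤ cS)
    (ρ c : ℝ) (hρ : 1 < ρ) (hc : 0 ≤ c)
    (κ : ℝ → W) (hκcont : ContinuousOn κ (Set.Icc 0 T)) (hκ0 : κ 0 = 0)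
    (hκ : ∀ s t : ℝ, 0 ≤ s → s ≤ t → t ≤ T →
      ‖κ t - S (t - s) (κ s)‖ ≤ c * (t - s) ^ ρ) :
    ∀ t : ℝ, 0 ≤ t → t ≤ T → κ t = 0 :=
  kappa_eq_zero_of_hat_delta_small_general T S hS0 hSadd cS hScS ρ c hρ κ hκ0 hκ
end

section
/- Let W and Ŵ be real Banach spaces and let G : W → Ŵ be three times continuously (Fréchet) differentiable with ‖DG(x)‖ ≤ c_G, ‖D²G(x)‖ ≤ c_G and ‖D³G(x)‖ ≤ c_G for all x ∈ W. Then there exists a constant C, depending only on c_G, such that for all x₁, x₂, x₃, x₄ ∈ W: ‖G(x₂) − G(x₁) − DG(x₁)(x₂ − x₁) − G(x₄) + G(x₃) + DG(x₃)(x₄ − x₃)‖ ≤ C (‖x₂ − x₁‖ + ‖x₄ − x₃‖) ‖x₂ − x₁ − x₄ + x₃‖ + C ‖x₄ − x₃‖² (‖x₃ − x₁‖ + ‖x₄ − x₂‖). -/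
/-!
Write `h = x₄ - x₃` and `R(x) = G(x + h) - G(x) - DG(x) h`. Since `x₃ + h = x₄`, the expression to
be estimated splits as `[G(x₂) - G(x₁ + h) - DG(x₁)(x₂ - x₁ - h)] + [R(x₁) - R(x₃)]`. The first
bracket is a first-order Taylor remainder between the nearby points `x₁ + h` and `x₂`, controlled by
the Lipschitz constant of `DG`. The derivative of `R` is `DG(x + h) - DG(x) - D²G(x) h` (by symmetry
of `D²G`), itself a Taylor remainder of `DG`, of size `‖D³G‖ ‖h‖²`; so `R` is Lipschitz with
constant `c_G ‖h‖²`.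
-/

open Metric

section

variable {E F : Type*} [NormedAddCommGroup E] [NormedSpace ℝ E]
  [NormedAddCommGroup F] [NormedSpace ℝ F]

lemma norm_sub_le_of_norm_fderiv_le {f : E → F} (hf : Differentiable ℝ f) {c : ℝ}
    (hbound : ∀ x, ‖fderiv ℝ f x‖ ≤ c) (x y : E) : ‖f y - f x‖ ≤ c * ‖y - x‖ :=
  convex_univ.norm_image_sub_le_of_norm_fderiv_le (fun z _ => hf z) (fun z _ => hbound z)
    trivial trivial

lemma norm_sub_sub_apply_le_of_lipschitz_at {f : E → F} {f' : E → E →L[ℝ] F}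
    (hf : ∀ z, HasFDerivAt f (f' z) z) {c : ℝ} (hc : 0 ≤ c) {x : E}
    (hlip : ∀ z, ‖f' z - f' x‖ ≤ c * ‖z - x‖) (a b : E) :
    ‖f b - f a - f' x (b - a)‖ ≤ c * (‖b - x‖ + ‖a - x‖) * ‖b - a‖ := by
  set r := ‖b - x‖ + ‖a - x‖
  have hsegment : segment ℝ a b ⊆ closedBall x r :=
    (convex_closedBall x r).segment_subset
      (mem_closedBall_iff_norm.2 (le_add_of_nonneg_left (norm_nonneg _)))
      (mem_closedBall_iff_norm.2 (le_add_of_nonneg_right (norm_nonneg _)))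
  refine Convex.norm_image_sub_le_of_norm_hasFDerivWithin_le'
    (fun z _ => (hf z).hasFDerivWithinAt) (fun z hz => ?_) (convex_segment a b)
    (left_mem_segment ℝ a b) (right_mem_segment ℝ a b)
  calc ‖f' z - f' x‖ ≤ c * ‖z - x‖ := hlip z
    _ ≤ c * r := by gcongr; exact mem_closedBall_iff_norm.1 (hsegment hz)

lemma norm_taylorRemainder_sub_le {f : E → F} (hf : ContDiff ℝ 2 f) {c : ℝ} (hc : 0 ≤ c)
    (hlip : ∀ x y, ‖fderiv ℝ (fderiv ℝ f) y - fderiv ℝ (fderiv ℝ f) x‖ ≤ c * ‖y - x‖)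
    (h x y : E) :
    ‖(f (y + h) - f y - fderiv ℝ f y h) - (f (x + h) - f x - fderiv ℝ f x h)‖ ≤
      c * ‖h‖ ^ 2 * ‖y - x‖ := by
  set D := fderiv ℝ f
  set D2 := fderiv ℝ D
  have hfD : ∀ z, HasFDerivAt f (D z) z :=
    fun z => (hf.differentiable (by norm_num) z).hasFDerivAt
  have hD : ContDiff ℝ 1 D := hf.fderiv_right (by norm_num)
  have hDD2 : ∀ z, HasFDerivAt D (D2 z) z :=
    fun z => (hD.differentiable (by norm_num) z).hasFDerivAt
  set R' : E → E →L[ℝ] F := fun z => D (z + h) - D z - D2 z h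
  have hR : ∀ z, HasFDerivAt (fun z => f (z + h) - f z - D z h) (R' z) z := by
    intro z
    have hshift : HasFDerivAt (fun z => f (z + h)) (D (z + h)) z :=
      (hfD (z + h)).comp z ((hasFDerivAt_id z).add_const h)
    have happly : HasFDerivAt (fun z => D z h) (D2 z h) z := by
      convert (hDD2 z).clm_apply (hasFDerivAt_const h z) using 1
      ext v
      simpa using (hf.contDiffAt.isSymmSndFDerivAt (by simp)) h v
    exact (hshift.sub (hfD z)).sub happly
  have hR'bound : ∀ z, ‖R' z‖ ≤ c * ‖h‖ ^ 2 := by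
    intro z
    simpa [R', sq, mul_assoc] using
      norm_sub_sub_apply_le_of_lipschitz_at hDD2 hc (hlip z) z (z + h)
  exact convex_univ.norm_image_sub_le_of_norm_hasFDerivWithin_le
    (fun z _ => (hR z).hasFDerivWithinAt) (fun z _ => hR'bound z) trivial trivial

end

theorem third_order_difference_estimate_general
    {W Wh : Type*} [NormedAddCommGroup W] [NormedSpace ℝ W]
    [NormedAddCommGroup Wh] [NormedSpace ℝ Wh]
    (G : W → Wh) (cG : ℝ)
    (hG : ContDiff ℝ 3 G)
    (hG2 : ∀ x : W, ‖fderiv ℝ (fderiv ℝ G) x‖ ≤ cG)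
    (hG3 : ∀ x : W, @norm _ ContinuousLinearMap.hasOpNorm (fderiv ℝ (fderiv ℝ (fderiv ℝ G)) x) ≤ cG) :
    ∃ C : ℝ, 0 ≤ C ∧ ∀ x₁ x₂ x₃ x₄ : W,
      ‖G x₂ - G x₁ - fderiv ℝ G x₁ (x₂ - x₁) - G x₄ + G x₃ + fderiv ℝ G x₃ (x₄ - x₃)‖ ≤
        C * (‖x₂ - x₁‖ + ‖x₄ - x₃‖) * ‖x₂ - x₁ - x₄ + x₃‖ +
          C * ‖x₄ - x₃‖ ^ 2 * (‖x₃ - x₁‖ + ‖x₄ - x₂‖) := by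
  have hc : 0 ≤ cG := (norm_nonneg (fderiv ℝ (fderiv ℝ G) 0)).trans (hG2 0)
  have hDG : ContDiff ℝ 2 (fderiv ℝ G) := hG.fderiv_right (by norm_num)
  have lipDG := norm_sub_le_of_norm_fderiv_le (hDG.differentiable (by norm_num)) hG2
  have lipD2G := norm_sub_le_of_norm_fderiv_le
    ((hDG.fderiv_right (m := 1) le_rfl).differentiable (by norm_num)) hG3
  refine ⟨cG, hc, fun x₁ x₂ x₃ x₄ => ?_⟩
  set h := x₄ - x₃
  have hx₄ : x₃ + h = x₄ := add_sub_cancel x₃ x₄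
  have hstep : x₂ - (x₁ + h) = x₂ - x₁ - x₄ + x₃ := by simp only [h]; abel
  have first := norm_sub_sub_apply_le_of_lipschitz_at
    (fun z => ((hG.differentiable (by norm_num)) z).hasFDerivAt) hc (lipDG x₁) (x₁ + h) x₂
  have second := norm_taylorRemainder_sub_le (hG.of_le (by norm_num)) hc lipD2G h x₃ x₁
  rw [hstep, add_sub_cancel_left] at first
  rw [hx₄, norm_sub_rev x₁] at second
  have hsplit : G x₂ - G x₁ - fderiv ℝ G x₁ (x₂ - x₁) - G x₄ + G x₃ + fderiv ℝ G x₃ h =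
      (G x₂ - G (x₁ + h) - fderiv ℝ G x₁ (x₂ - x₁ - x₄ + x₃)) +
        ((G (x₁ + h) - G x₁ - fderiv ℝ G x₁ h) - (G x₄ - G x₃ - fderiv ℝ G x₃ h)) := by
    simp only [h, map_sub, map_add]; abel
  rw [hsplit]
  refine (norm_add_le_of_le first second).trans ?_
  gcongr
  exact le_add_of_nonneg_right (norm_nonneg _)

/-- Third-order (Taylor remainder) difference estimate for a `C³_b` function. -/
theorem third_order_difference_estimate
    {W Wh : Type*} [NormedAddCommGroup W] [NormedSpace ℝ W]
    [NormedAddCommGroup Wh] [NormedSpace ℝ Wh]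
    (G : W → Wh) (cG : ℝ)
    (hG : ContDiff ℝ 3 G)
    (hG1 : ∀ x : W, ‖fderiv ℝ G x‖ ≤ cG)
    (hG2 : ∀ x : W, ‖fderiv ℝ (fderiv ℝ G) x‖ ≤ cG)
    (hG3 : ∀ x : W, @norm _ ContinuousLinearMap.hasOpNorm (fderiv ℝ (fderiv ℝ (fderiv ℝ G)) x) ≤ cG) :
    ∃ C : ℝ, 0 ≤ C ∧ ∀ x₁ x₂ x₃ x₄ : W,
      ‖G x₂ - G x₁ - fderiv ℝ G x₁ (x₂ - x₁) - G x₄ + G x₃ + fderiv ℝ G x₃ (x₄ - x₃)‖ ≤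
        C * (‖x₂ - x₁‖ + ‖x₄ - x₃‖) * ‖x₂ - x₁ - x₄ + x₃‖ +
          C * ‖x₄ - x₃‖ ^ 2 * (‖x₃ - x₁‖ + ‖x₄ - x₂‖) :=
  third_order_difference_estimate_general G cG hG hG2 hG3
end
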